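/- arXiv:1804.04921 — 9 statements merged into one kernel-verified Lean document; each statement's English description precedes it below -/
import Mathlib

section
/- Let δ ≥ 0 and let (ω_k)_{k≥1} and (ω̃_k)_{k≥1} be real sequences. Define real sequences (q_k) and (q̃_k) by q_1 = q̃_1 ≥ 0 and, for every k ≥ 1, q_{k+1} = max(0, q_k + ω_k) and q̃_{k+1} = max(0, q̃_k + ω̃_k). If |∑_{i=1}^k (ω_i − ω̃_i)| ≤ δ/2 for every k ≥ 1, then |q_k − q̃_k| ≤ δ for every k ≥ 1. -/
lemma queue_one_sided (ω ωt q qt : ℕ → ℝ)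
    (hinit : q 1 = qt 1)
    (hq : ∀ k ≥ 1, q (k + 1) = max 0 (q k + ω k))
    (hqt : ∀ k ≥ 1, qt (k + 1) = max 0 (qt k + ωt k)) :
    ∀ k : ℕ, ∃ j ≤ k, q (k + 1) - qt (k + 1) ≤
      (∑ i ∈ Finset.Icc 1 k, (ω i - ωt i)) - ∑ i ∈ Finset.Icc 1 j, (ω i - ωt i) := by
  intro k
  induction k with
  | zero => exact ⟨0, le_refl 0, by simp [hinit]⟩
  | succ k ih =>
    obtain ⟨j, hj, hle⟩ := ih
    have h1 : q (k + 1 + 1) = max 0 (q (k + 1) + ω (k + 1)) := hq (k + 1) (Nat.le_add_left 1 k)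
    have h2 : qt (k + 1 + 1) = max 0 (qt (k + 1) + ωt (k + 1)) := hqt (k + 1) (Nat.le_add_left 1 k)
    have hS : ∑ i ∈ Finset.Icc 1 (k + 1), (ω i - ωt i) =
        (∑ i ∈ Finset.Icc 1 k, (ω i - ωt i)) + (ω (k + 1) - ωt (k + 1)) :=
      Finset.sum_Icc_succ_top (Nat.le_add_left 1 k) _
    have key : q (k + 1 + 1) - qt (k + 1 + 1) ≤
        max 0 ((∑ i ∈ Finset.Icc 1 (k + 1), (ω i - ωt i)) - ∑ i ∈ Finset.Icc 1 j, (ω i - ωt i)) := by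
      rw [h1, h2, hS]
      rcases le_total (qt (k + 1) + ωt (k + 1)) 0 with h | h
      · have : max 0 (qt (k + 1) + ωt (k + 1)) = 0 := max_eq_left h
        rw [this]
        rcases le_total (q (k + 1) + ω (k + 1)) 0 with h' | h'
        · simp [max_eq_left h', le_max_left]
        · rw [max_eq_right h']
          calc q (k + 1) + ω (k + 1) - 0
              ≤ (∑ i ∈ Finset.Icc 1 k, (ω i - ωt i)) + (ω (k + 1) - ωt (k + 1)) -
                ∑ i ∈ Finset.Icc 1 j, (ω i - ωt i) := by
                have := h
                nlinarith [hle]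
            _ ≤ _ := le_max_right _ _
      · rw [max_eq_right h]
        calc max 0 (q (k + 1) + ω (k + 1)) - (qt (k + 1) + ωt (k + 1))
            ≤ max ((qt (k + 1) + ωt (k + 1))) (q (k + 1) + ω (k + 1)) - (qt (k + 1) + ωt (k + 1)) := by
              apply sub_le_sub_right
              exact max_le_max h (le_refl _)
          _ ≤ max 0 ((∑ i ∈ Finset.Icc 1 k, (ω i - ωt i)) + (ω (k + 1) - ωt (k + 1)) -
                ∑ i ∈ Finset.Icc 1 j, (ω i - ωt i)) := by
              rcases max_cases (qt (k + 1) + ωt (k + 1)) (q (k + 1) + ω (k + 1)) with ⟨heq, _⟩ | ⟨heq, _⟩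
              · rw [heq]; simp [le_max_left]
              · rw [heq]
                refine le_trans ?_ (le_max_right _ _)
                linarith [hle]
    rcases le_total ((∑ i ∈ Finset.Icc 1 (k + 1), (ω i - ωt i)) - ∑ i ∈ Finset.Icc 1 j, (ω i - ωt i)) 0 with h | h
    · exact ⟨k + 1, le_refl _, by rw [max_eq_left h] at key; linarith [key]⟩
    · exact ⟨j, Nat.le_succ_of_le hj, by rw [max_eq_right h] at key; exact key⟩

/-- Queue continuity: two queues with the same nonnegative initial value, whose
increment sequences have partial sums differing by at most `δ/2`, remain within
`δ` of each other. -/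
theorem stmt_0 (δ : ℝ) (hδ : 0 ≤ δ) (ω ωt q qt : ℕ → ℝ)
    (hinit : q 1 = qt 1) (hinit0 : 0 ≤ q 1)
    (hq : ∀ k ≥ 1, q (k + 1) = max 0 (q k + ω k))
    (hqt : ∀ k ≥ 1, qt (k + 1) = max 0 (qt k + ωt k))
    (hsum : ∀ k ≥ 1, |∑ i ∈ Finset.Icc 1 k, (ω i - ωt i)| ≤ δ / 2) :
    ∀ k ≥ 1, |q k - qt k| ≤ δ := by
  have hSbound : ∀ m : ℕ, |∑ i ∈ Finset.Icc 1 m, (ω i - ωt i)| ≤ δ / 2 := by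
    intro m
    rcases Nat.eq_zero_or_pos m with rfl | hm
    · simp; linarith
    · exact hsum m hm
  have hsum' : ∀ k ≥ 1, |∑ i ∈ Finset.Icc 1 k, (ωt i - ω i)| ≤ δ / 2 := by
    intro k hk
    have : ∑ i ∈ Finset.Icc 1 k, (ωt i - ω i) = -∑ i ∈ Finset.Icc 1 k, (ω i - ωt i) := by
      rw [← Finset.sum_neg_distrib]; exact Finset.sum_congr rfl fun i _ => by ring
    rw [this, abs_neg]; exact hsum k hk
  have hSbound' : ∀ m : ℕ, |∑ i ∈ Finset.Icc 1 m, (ωt i - ω i)| ≤ δ / 2 := by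
    intro m
    rcases Nat.eq_zero_or_pos m with rfl | hm
    · simp; linarith
    · exact hsum' m hm
  intro k hk
  obtain ⟨m, rfl⟩ : ∃ m, k = m + 1 := ⟨k - 1, (Nat.succ_pred_eq_of_pos hk).symm⟩
  obtain ⟨j, _, h1⟩ := queue_one_sided ω ωt q qt hinit hq hqt m
  obtain ⟨j', _, h2⟩ := queue_one_sided ωt ω qt q hinit.symm hqt hq m
  rw [abs_le]
  constructor
  · have a1 := abs_le.mp (hSbound' m)
    have a2 := abs_le.mp (hSbound' j')
    linarith [h2]
  · have a1 := abs_le.mp (hSbound m)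
    have a2 := abs_le.mp (hSbound j)
    linarith [h1]
end

section
/- For every k ≥ d+1, |Q^r_k − Q̂^r_k| ≤ 2·d·max(p, 1−p). -/
/-- Telescoping sum over an integer interval. -/
theorem stmt_2_tele (f : ℤ → ℝ) (a : ℤ) : ∀ n : ℕ,
    ∑ j ∈ Finset.Ico a (a + n), (f (j+1) - f j) = f (a + n) - f a := by
  intro n
  induction n with
  | zero => simp
  | succ m ih =>
    have h1 : a ≤ a + (m : ℤ) := by linarith [Int.ofNat_nonneg m]
    have h2 : (a : ℤ) + ((m : ℕ) + 1 : ℕ) = (a + m) + 1 := by push_cast; ring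
    have h3 : Finset.Ico a (a + (m:ℤ) + 1) = insert (a + (m:ℤ)) (Finset.Ico a (a + (m:ℤ))) := by
      rw [Finset.Ico_insert_right h1]; ext x
      simp only [Finset.mem_Ico, Finset.mem_Icc]; omega
    rw [h2, h3, Finset.sum_insert (by simp), ih]; ring

/-- Bound on the deviation of a one-step queue update from a drift estimate. -/
theorem stmt_2_aux (Q t e m' : ℝ) (hQ : 0 ≤ Q) (h1 : -m' ≤ t - Q - e)
    (h2 : t - Q - e ≤ m') (h3 : -e ≤ m') : |max 0 t - Q - e| ≤ m' := by
  rcases max_cases (0:ℝ) t with ⟨ha, hb⟩ | ⟨ha, hb⟩ <;> rw [ha, abs_le] <;>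
    constructor <;> linarith

/-- Worst-case accuracy of the `d`-step ahead estimator `Q̂^r` of the receiver
virtual queue `Q^r`: for every `k ≥ d + 1`, `|Q^r_k − Q̂^r_k| ≤ 2·d·max(p, 1−p)`. -/
theorem stmt_2 (d : ℤ) (hd : 1 ≤ d) (p : ℝ) (hp0 : 0 ≤ p) (hp1 : p ≤ 1) (q0 : ℕ)
    (S C X Qr Qhat : ℤ → ℝ)
    (hS : ∀ k, S k = 0 ∨ S k = 1)
    (hC : ∀ k, C k = 0 ∨ C k = 1)
    (hX : ∀ k, X k = 0 ∨ X k = 1)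
    (hSC : ∀ k, S k + C k ≤ 1)
    (hS0 : ∀ j ≤ (0 : ℤ), S j = 0)
    (hC0 : ∀ j ≤ (0 : ℤ), C j = 0)
    (hX0 : ∀ j ≤ (0 : ℤ), X j = 0)
    (hQinit : ∀ j ≤ (1 : ℤ), Qr j = (q0 : ℝ))
    (hQrec : ∀ k ≥ (1 : ℤ), Qr (k + 1) = max 0 (Qr k + S k * X k - C k * (1 - X k)))
    (hQhat : ∀ k ≥ (1 : ℤ),
      Qhat k = Qr (k - d) + ∑ j ∈ Finset.Ico (k - d) k, (S j * p - C j * (1 - p))) :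
    ∀ k ≥ d + 1, |Qr k - Qhat k| ≤ 2 * (d : ℝ) * max p (1 - p) := by
  set m : ℝ := max p (1 - p) with hm
  have hmp : p ≤ m := le_max_left _ _
  have hm1 : 1 - p ≤ m := le_max_right _ _
  have hm0 : 0 ≤ m := le_trans hp0 hmp
  -- nonnegativity of Qr
  have hQpos : ∀ j, 0 ≤ Qr j := by
    intro j
    rcases le_or_gt j 1 with h | h
    · rw [hQinit j h]; exact Nat.cast_nonneg q0
    · have hj : j = (j - 1) + 1 := by ring
      rw [hj, hQrec (j - 1) (by omega)]
      exact le_max_left _ _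
  -- per-step bound
  have hstep : ∀ j ≥ (1 : ℤ), |Qr (j+1) - Qr j - (S j * p - C j * (1 - p))| ≤ m := by
    intro j hj
    rw [hQrec j hj]
    refine stmt_2_aux (Qr j) _ _ m (hQpos j) ?_ ?_ ?_
    · rcases hS j with hs | hs <;> rcases hC j with hc | hc <;>
        rcases hX j with hx | hx <;> rw [hs, hc, hx] <;> linarith [hSC j]
    · rcases hS j with hs | hs <;> rcases hC j with hc | hc <;>
        rcases hX j with hx | hx <;> rw [hs, hc, hx] <;> linarith [hSC j]
    · rcases hS j with hs | hs <;> rcases hC j with hc | hc <;>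
        rw [hs, hc] <;> linarith [hSC j]
  intro k hk
  have hk1 : (1 : ℤ) ≤ k - d := by omega
  have hka : (1 : ℤ) ≤ k := by omega
  have hdn : ((d.toNat : ℤ)) = d := Int.toNat_of_nonneg (by omega)
  have htel : ∑ j ∈ Finset.Ico (k - d) k, (Qr (j+1) - Qr j) = Qr k - Qr (k - d) := by
    have h := stmt_2_tele Qr (k - d) d.toNat
    rw [hdn] at h
    simpa using h
  have hdiff : Qr k - Qhat k
      = ∑ j ∈ Finset.Ico (k - d) k, ((Qr (j+1) - Qr j) - (S j * p - C j * (1 - p))) := by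
    have h2 : ∑ j ∈ Finset.Ico (k - d) k, ((Qr (j+1) - Qr j) - (S j * p - C j * (1 - p)))
        = (Qr k - Qr (k - d)) - ∑ j ∈ Finset.Ico (k - d) k, (S j * p - C j * (1 - p)) := by
      rw [Finset.sum_sub_distrib, htel]
    rw [hQhat k hka, h2]; ring
  rw [hdiff]
  have hcard : ((Finset.Ico (k - d) k).card : ℝ) = (d : ℝ) := by
    rw [Int.card_Ico]
    have h2 : (k - (k - d)) = d := by ring
    rw [h2]
    exact_mod_cast congrArg (fun z : ℤ => (z : ℝ)) hdn
  calc |∑ j ∈ Finset.Ico (k - d) k, ((Qr (j+1) - Qr j) - (S j * p - C j * (1 - p)))|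
      ≤ ∑ j ∈ Finset.Ico (k - d) k, |(Qr (j+1) - Qr j) - (S j * p - C j * (1 - p))| :=
        Finset.abs_sum_le_sum_abs _ _
    _ ≤ ∑ _j ∈ Finset.Ico (k - d) k, m := by
        apply Finset.sum_le_sum
        intro j hjmem
        have hj1 : (1 : ℤ) ≤ j := by
          have := (Finset.mem_Ico.mp hjmem).1; omega
        exact hstep j hj1
    _ = (d : ℝ) * m := by rw [Finset.sum_const, nsmul_eq_mul, hcard]
    _ ≤ 2 * (d : ℝ) * m := by
        have hdr : (1 : ℝ) ≤ (d : ℝ) := by exact_mod_cast hd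
        nlinarith
end

section
/- If for a given k ≥ 1 a coded packet is sent and no information packet is sent (that is, C_k = 1 and S_k = 0), then the estimator does not increase: Q̂^r_{k+1} ≤ Q̂^r_k. -/
lemma my_Ico_top (a b : ℤ) (h : a ≤ b) (f : ℤ → ℝ) :
    ∑ j ∈ Finset.Ico a (b + 1), f j = (∑ j ∈ Finset.Ico a b, f j) + f b := by
  have he : Finset.Ico a (b + 1) = insert b (Finset.Ico a b) := by
    ext x; simp; omega
  rw [he, Finset.sum_insert (by simp)]
  ring

lemma my_Ico_bot (a b : ℤ) (h : a < b) (f : ℤ → ℝ) :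
    ∑ j ∈ Finset.Ico a b, f j = f a + ∑ j ∈ Finset.Ico (a + 1) b, f j := by
  have he : Finset.Ico a b = insert a (Finset.Ico (a + 1) b) := by
    ext x; simp; omega
  rw [he, Finset.sum_insert (by simp)]


/-- If in slot `k ≥ 1` a coded packet is sent and no information packet is sent
(`C_k = 1`, `S_k = 0`), then the estimator does not increase: `Q̂^r_{k+1} ≤ Q̂^r_k`. -/
theorem stmt_4 (d : ℤ) (hd : 1 ≤ d) (p : ℝ) (hp0 : 0 ≤ p) (hp1 : p ≤ 1) (q0 : ℕ)
    (S C X Qr Qhat : ℤ → ℝ)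
    (hS : ∀ k, S k = 0 ∨ S k = 1)
    (hC : ∀ k, C k = 0 ∨ C k = 1)
    (hX : ∀ k, X k = 0 ∨ X k = 1)
    (hSC : ∀ k, S k + C k ≤ 1)
    (hS0 : ∀ j ≤ (0 : ℤ), S j = 0)
    (hC0 : ∀ j ≤ (0 : ℤ), C j = 0)
    (hX0 : ∀ j ≤ (0 : ℤ), X j = 0)
    (hQinit : ∀ j ≤ (1 : ℤ), Qr j = (q0 : ℝ))
    (hQrec : ∀ k ≥ (1 : ℤ), Qr (k + 1) = max 0 (Qr k + S k * X k - C k * (1 - X k)))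
    (hQhat : ∀ k ≥ (1 : ℤ),
      Qhat k = Qr (k - d) + ∑ j ∈ Finset.Ico (k - d) k, (S j * p - C j * (1 - p)))
    (k : ℤ) (hk : 1 ≤ k) (hCk : C k = 1) (hSk : S k = 0) :
    Qhat (k + 1) ≤ Qhat k := by
  -- nonnegativity of Qr
  have hQnn : ∀ j, 0 ≤ Qr j := by
    intro j
    rcases le_or_gt j 1 with h | h
    · rw [hQinit j h]; positivity
    · have h1 : (1 : ℤ) ≤ j - 1 := by omega
      have := hQrec (j - 1) h1
      have hj : j - 1 + 1 = j := by ring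
      rw [hj] at this
      rw [this]; exact le_max_left _ _
  -- key one-step bound
  have key : ∀ j, Qr (j + 1) - Qr j ≤ S j * p - C j * (1 - p) + (1 - p) := by
    intro j
    rcases le_or_gt j 0 with h | h
    · rw [hQinit j (by omega), hQinit (j + 1) (by omega), hS0 j h, hC0 j h]
      nlinarith
    · have h1 : (1 : ℤ) ≤ j := h
      rw [hQrec j h1]
      have hq := hQnn j
      have hXle : X j ≤ 1 := by rcases hX j with h' | h' <;> simp [h']
      have hX0' : 0 ≤ X j := by rcases hX j with h' | h' <;> simp [h']
      have hsc := hSC j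
      rw [sub_le_iff_le_add]
      apply max_le
      · rcases hS j with hs | hs <;> rcases hC j with hc | hc <;>
          simp [hs, hc] at hsc ⊢ <;> nlinarith
      · rcases hS j with hs | hs <;> rcases hC j with hc | hc <;>
          simp [hs, hc] at hsc ⊢ <;> nlinarith
  have hk1 : (1 : ℤ) ≤ k + 1 := by omega
  rw [hQhat k hk, hQhat (k + 1) hk1]
  have e1 : k + 1 - d = (k - d) + 1 := by ring
  have hlt : k - d < k := by omega
  have hle : k - d + 1 ≤ k := by omega
  have s1 : ∑ j ∈ Finset.Ico (k + 1 - d) (k + 1), (S j * p - C j * (1 - p))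
      = (∑ j ∈ Finset.Ico (k - d + 1) k, (S j * p - C j * (1 - p)))
        + (S k * p - C k * (1 - p)) := by
    rw [e1, my_Ico_top _ _ hle]
  have s2 : ∑ j ∈ Finset.Ico (k - d) k, (S j * p - C j * (1 - p))
      = (S (k - d) * p - C (k - d) * (1 - p))
        + ∑ j ∈ Finset.Ico (k - d + 1) k, (S j * p - C j * (1 - p)) := by
    rw [my_Ico_bot _ _ hlt]
  rw [s1, s2, e1]
  have := key (k - d)
  rw [hSk, hCk]
  linarith
end

section
/- Under the threshold-γ policy the following hold for every k ≥ 1: (i) if C_k = 0 then Q̂^r_{k+1} ≤ Q̂^r_k + 1; (ii) if Q̂^r_k ≤ γ + 1 then Q̂^r_{k+1} ≤ γ + 1. Consequently, if Q̂^r_{k0} ≤ γ + 1 for some k0 ≥ 1, then Q̂^r_k ≤ γ + 1 for all k ≥ k0. -/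
private lemma ico_sum_top (f : ℤ → ℝ) (a b : ℤ) (h : a ≤ b) :
    ∑ j ∈ Finset.Ico a (b + 1), f j = (∑ j ∈ Finset.Ico a b, f j) + f b := by
  rw [← Finset.Ico_union_Ico_eq_Ico h (by omega : b ≤ b + 1),
    Finset.sum_union (Finset.Ico_disjoint_Ico_consecutive a b (b + 1))]
  have : Finset.Ico b (b + 1) = {b} := by ext x; simp; omega
  rw [this, Finset.sum_singleton]

private lemma ico_sum_bot (f : ℤ → ℝ) (a b : ℤ) (h : a ≤ b) :
    ∑ j ∈ Finset.Ico a (b + 1), f j = f a + ∑ j ∈ Finset.Ico (a + 1) (b + 1), f j := by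
  rw [← Finset.Ico_union_Ico_eq_Ico (by omega : a ≤ a + 1) (by omega : a + 1 ≤ b + 1),
    Finset.sum_union (Finset.Ico_disjoint_Ico_consecutive a (a + 1) (b + 1))]
  have : Finset.Ico a (a + 1) = {a} := by ext x; simp; omega
  rw [this, Finset.sum_singleton]

/-- Under the threshold-`γ` policy: (i) if `C_k = 0` then `Q̂^r_{k+1} ≤ Q̂^r_k + 1`;
(ii) if `Q̂^r_k ≤ γ + 1` then `Q̂^r_{k+1} ≤ γ + 1`; consequently once `Q̂^r` is
below `γ + 1` it stays below `γ + 1`. -/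
theorem stmt_5 (d : ℤ) (hd : 1 ≤ d) (p : ℝ) (hp0 : 0 ≤ p) (hp1 : p ≤ 1) (q0 : ℕ)
    (γ : ℝ) (hγ : 0 ≤ γ)
    (S C X Qr Qhat : ℤ → ℝ)
    (hS : ∀ k, S k = 0 ∨ S k = 1)
    (hC : ∀ k, C k = 0 ∨ C k = 1)
    (hX : ∀ k, X k = 0 ∨ X k = 1)
    (hSC : ∀ k, S k + C k ≤ 1)
    (hS0 : ∀ j ≤ (0 : ℤ), S j = 0)
    (hC0 : ∀ j ≤ (0 : ℤ), C j = 0)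
    (hX0 : ∀ j ≤ (0 : ℤ), X j = 0)
    (hQinit : ∀ j ≤ (1 : ℤ), Qr j = (q0 : ℝ))
    (hQrec : ∀ k ≥ (1 : ℤ), Qr (k + 1) = max 0 (Qr k + S k * X k - C k * (1 - X k)))
    (hQhat : ∀ k ≥ (1 : ℤ),
      Qhat k = Qr (k - d) + ∑ j ∈ Finset.Ico (k - d) k, (S j * p - C j * (1 - p)))
    (hpolC : ∀ k ≥ (1 : ℤ), C k = if γ < Qhat k then 1 else 0)
    (hpolS : ∀ k ≥ (1 : ℤ), S k = 1 - C k) :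
    (∀ k ≥ (1 : ℤ),
      (C k = 0 → Qhat (k + 1) ≤ Qhat k + 1) ∧
      (Qhat k ≤ γ + 1 → Qhat (k + 1) ≤ γ + 1)) ∧
    (∀ k0 ≥ (1 : ℤ), Qhat k0 ≤ γ + 1 → ∀ k ≥ k0, Qhat k ≤ γ + 1) := by
  -- Qr is nonnegative
  have hQnn : ∀ j : ℤ, 0 ≤ Qr j := by
    intro j
    rcases le_or_gt j 1 with h | h
    · rw [hQinit j h]; positivity
    · have h1 : (1 : ℤ) ≤ j - 1 := by omega
      have := hQrec (j - 1) h1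
      rw [show j - 1 + 1 = j by ring] at this
      rw [this]; exact le_max_left _ _
  -- drift formula
  have key : ∀ k ≥ (1 : ℤ), Qhat (k + 1) = Qhat k + (Qr (k - d + 1) - Qr (k - d))
      + (S k * p - C k * (1 - p)) - (S (k - d) * p - C (k - d) * (1 - p)) := by
    intro k hk
    have h1 := hQhat k hk
    have h2 := hQhat (k + 1) (by omega)
    have hm : k - d ≤ k := by omega
    rw [h1, h2, show k + 1 - d = k - d + 1 by ring]
    have hs : ∑ j ∈ Finset.Ico (k - d) (k + 1), (S j * p - C j * (1 - p))
        = (∑ j ∈ Finset.Ico (k - d) k, (S j * p - C j * (1 - p)))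
          + (S k * p - C k * (1 - p)) := ico_sum_top _ _ _ hm
    have hs2 : ∑ j ∈ Finset.Ico (k - d) (k + 1), (S j * p - C j * (1 - p))
        = (S (k - d) * p - C (k - d) * (1 - p))
          + ∑ j ∈ Finset.Ico (k - d + 1) (k + 1), (S j * p - C j * (1 - p)) :=
      ico_sum_bot _ _ _ hm
    have : ∑ j ∈ Finset.Ico (k - d + 1) (k + 1), (S j * p - C j * (1 - p))
        = (∑ j ∈ Finset.Ico (k - d) k, (S j * p - C j * (1 - p)))
          + (S k * p - C k * (1 - p)) - (S (k - d) * p - C (k - d) * (1 - p)) := by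
      rw [← hs]; linarith [hs2]
    rw [this]; ring
  -- bound on the delayed-slot contribution
  have hBbound : ∀ k ≥ (1 : ℤ),
      Qr (k - d + 1) - Qr (k - d) - (S (k - d) * p - C (k - d) * (1 - p))
        ≤ max 0 (S (k - d) * X (k - d) - C (k - d) * (1 - X (k - d)))
          - (S (k - d) * p - C (k - d) * (1 - p)) := by
    intro k hk
    set m := k - d with hmdef
    rcases le_or_gt m 0 with hm0 | hm1
    · rw [hQinit m (by omega), hQinit (m + 1) (by omega), hS0 m hm0, hC0 m hm0]
      simp [le_max_iff]
    · have := hQrec m hm1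
      rw [this]
      have h1 : max 0 (Qr m + S m * X m - C m * (1 - X m))
          ≤ Qr m + max 0 (S m * X m - C m * (1 - X m)) := by
        apply max_le
        · have := hQnn m; have := le_max_left (0:ℝ) (S m * X m - C m * (1 - X m)); linarith
        · have := le_max_right (0:ℝ) (S m * X m - C m * (1 - X m)); linarith
      linarith
  -- combined pointwise step bounds
  have hstep : ∀ k ≥ (1 : ℤ),
      (C k = 0 → Qhat (k + 1) ≤ Qhat k + 1) ∧
      (Qhat k ≤ γ + 1 → Qhat (k + 1) ≤ γ + 1) := by
    intro k hk
    have hkey := key k hk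
    have hB := hBbound k hk
    set m := k - d with hmdef
    -- bound the max-term by cases
    have hmax1 : max 0 (S m * X m - C m * (1 - X m)) - (S m * p - C m * (1 - p)) ≤ 1 - p := by
      have hscm := hSC m
      rcases hS m with hs | hs <;> rcases hC m with hc | hc <;> rcases hX m with hx | hx <;>
        rw [hs, hc] at hscm <;> rw [hs, hc, hx] <;> simp [max_le_iff] <;> linarith
    have hCfact : C k = 0 ∨ (C k = 1 ∧ S k = 0) := by
      rcases hC k with hc | hc
      · left; exact hc
      · right; exact ⟨hc, by rw [hpolS k hk, hc]; ring⟩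
    constructor
    · intro hc0
      have hSk : S k ≤ 1 := by rcases hS k with h | h <;> rw [h] <;> norm_num
      have hSk0 : 0 ≤ S k := by rcases hS k with h | h <;> rw [h] <;> norm_num
      rw [hkey, hc0]
      nlinarith
    · intro hle
      rcases lt_or_ge γ (Qhat k) with hgt | hle2
      · -- C k = 1, S k = 0
        have hc : C k = 1 := by rw [hpolC k hk]; simp [hgt]
        have hs : S k = 0 := by rw [hpolS k hk, hc]; ring
        rw [hkey, hc, hs]
        nlinarith
      · -- Qhat k ≤ γ, so C k = 0
        have hc : C k = 0 := by rw [hpolC k hk]; simp [not_lt.mpr hle2]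
        have hSk : S k ≤ 1 := by rcases hS k with h | h <;> rw [h] <;> norm_num
        have hSk0 : 0 ≤ S k := by rcases hS k with h | h <;> rw [h] <;> norm_num
        rw [hkey, hc]
        nlinarith
  refine ⟨hstep, ?_⟩
  intro k0 hk0 hinit k hkk
  exact Int.le_induction hinit (fun n hn ih => (hstep n (by omega)).2 ih) k hkk
end

section
/- Suppose the threshold-γ policy is used, δ ≥ 0, Q^r_k − Q̂^r_k ≤ δ for all k ≥ k0, and Q̂^r_{k0} ≤ γ + 1 for some k0 ≥ 1. Then 0 ≤ Q^r_k ≤ γ + δ + 1 for all k ≥ k0. In particular, if the initial condition is q0 = 0 (so that Q̂^r_1 = 0 ≤ γ + 1) and Q^r_k − Q̂^r_k ≤ δ for all k ≥ 1, then 0 ≤ Q^r_k ≤ γ + δ + 1 for all k ≥ 1. -/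
/-!
While the estimate is above `γ` a coded packet is sent and the queue cannot grow; otherwise an
information packet is sent, the queue grows by at most one, and accuracy gives
`Q^r_k ≤ Q̂^r_k + δ ≤ γ + δ`. So the bound `γ + δ + 1`, true at `k0` because `Q̂^r_{k0} ≤ γ + 1`,
propagates by induction.
-/

theorem threshold_update_le {γ δ q qhat x : ℝ} (hx : x ≤ 1) (hq0 : 0 ≤ q)
    (hq : q ≤ γ + δ + 1) (hacc : q - qhat ≤ δ) :
    max 0 (q + (1 - if γ < qhat then 1 else 0) * x - (if γ < qhat then 1 else 0) * (1 - x))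
      ≤ γ + δ + 1 := by
  refine max_le (hq0.trans hq) ?_
  split_ifs with hcoded
  · linarith
  · linarith [not_lt.mp hcoded]

section Queue

variable {q0 : ℕ} {S C X Qr : ℤ → ℝ}

theorem queue_nonneg (hQinit : ∀ j ≤ (1 : ℤ), Qr j = (q0 : ℝ))
    (hQrec : ∀ k ≥ (1 : ℤ), Qr (k + 1) = max 0 (Qr k + S k * X k - C k * (1 - X k))) (k : ℤ) :
    0 ≤ Qr k := by
  rcases le_or_gt k 1 with hk | hk
  · rw [hQinit k hk]
    positivity
  · rw [show k = k - 1 + 1 by ring, hQrec (k - 1) (by omega)]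
    exact le_max_left _ _

theorem queue_le_of_threshold {γ δ : ℝ} {Qhat : ℤ → ℝ}
    (hX : ∀ k, X k ≤ 1)
    (hQinit : ∀ j ≤ (1 : ℤ), Qr j = (q0 : ℝ))
    (hQrec : ∀ k ≥ (1 : ℤ), Qr (k + 1) = max 0 (Qr k + S k * X k - C k * (1 - X k)))
    (hpolC : ∀ k ≥ (1 : ℤ), C k = if γ < Qhat k then 1 else 0)
    (hpolS : ∀ k ≥ (1 : ℤ), S k = 1 - C k)
    {k0 : ℤ} (hk0 : 1 ≤ k0) (hacc : ∀ k ≥ k0, Qr k - Qhat k ≤ δ)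
    (hstart : Qhat k0 ≤ γ + 1) :
    ∀ k ≥ k0, Qr k ≤ γ + δ + 1 := by
  intro k hk
  induction k, hk using Int.leInduction with
  | base => linarith [hacc k0 le_rfl]
  | succ k hk ih =>
    have hk1 : 1 ≤ k := hk0.trans hk
    rw [hQrec k hk1, hpolS k hk1, hpolC k hk1]
    exact threshold_update_le (hX k) (queue_nonneg hQinit hQrec k) ih (hacc k hk)

theorem estimate_one_eq {p : ℝ} {Qhat : ℤ → ℝ} {d : ℤ}
    (hS0 : ∀ j ≤ (0 : ℤ), S j = 0) (hC0 : ∀ j ≤ (0 : ℤ), C j = 0)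
    (hQhat : Qhat 1 = Qr (1 - d) + ∑ j ∈ Finset.Ico (1 - d) 1, (S j * p - C j * (1 - p))) :
    Qhat 1 = Qr (1 - d) := by
  rw [hQhat, add_eq_left]
  refine Finset.sum_eq_zero fun j hj => ?_
  have hj0 : j ≤ 0 := by have := (Finset.mem_Ico.mp hj).2; omega
  rw [hS0 j hj0, hC0 j hj0]
  ring

end Queue

theorem stmt_6_general (d : ℤ) (hd : 1 ≤ d) (p : ℝ) (q0 : ℕ)
    (γ δ : ℝ) (hγ : 0 ≤ γ)
    (S C X Qr Qhat : ℤ → ℝ)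
    (hX : ∀ k, X k = 0 ∨ X k = 1)
    (hS0 : ∀ j ≤ (0 : ℤ), S j = 0)
    (hC0 : ∀ j ≤ (0 : ℤ), C j = 0)
    (hQinit : ∀ j ≤ (1 : ℤ), Qr j = (q0 : ℝ))
    (hQrec : ∀ k ≥ (1 : ℤ), Qr (k + 1) = max 0 (Qr k + S k * X k - C k * (1 - X k)))
    (hQhat : ∀ k ≥ (1 : ℤ),
      Qhat k = Qr (k - d) + ∑ j ∈ Finset.Ico (k - d) k, (S j * p - C j * (1 - p)))
    (hpolC : ∀ k ≥ (1 : ℤ), C k = if γ < Qhat k then 1 else 0)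
    (hpolS : ∀ k ≥ (1 : ℤ), S k = 1 - C k)
    (k0 : ℤ) (hk0 : 1 ≤ k0)
    (hacc : ∀ k ≥ k0, Qr k - Qhat k ≤ δ)
    (hstart : Qhat k0 ≤ γ + 1) :
    (∀ k ≥ k0, 0 ≤ Qr k ∧ Qr k ≤ γ + δ + 1) ∧
    (q0 = 0 → (∀ k ≥ (1 : ℤ), Qr k - Qhat k ≤ δ) →
      ∀ k ≥ (1 : ℤ), 0 ≤ Qr k ∧ Qr k ≤ γ + δ + 1) := by
  have hX1 : ∀ k, X k ≤ 1 := fun k => by rcases hX k with h | h <;> norm_num [h]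
  refine ⟨fun k hk => ⟨queue_nonneg hQinit hQrec k,
    queue_le_of_threshold hX1 hQinit hQrec hpolC hpolS hk0 hacc hstart k hk⟩, ?_⟩
  rintro rfl hacc1 k hk
  have hQhat1 : Qhat 1 = 0 := by
    rw [estimate_one_eq hS0 hC0 (hQhat 1 le_rfl), hQinit _ (by omega), Nat.cast_zero]
  exact ⟨queue_nonneg hQinit hQrec k,
    queue_le_of_threshold hX1 hQinit hQrec hpolC hpolS le_rfl hacc1 (by linarith) k hk⟩

/-- Under the threshold-`γ` policy, if the estimator is accurate to within `δ`
from slot `k0` on and `Q̂^r_{k0} ≤ γ + 1`, then `0 ≤ Q^r_k ≤ γ + δ + 1` for all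
`k ≥ k0`.  In particular, if `q0 = 0` and the estimator is accurate to within
`δ` for all `k ≥ 1`, then `0 ≤ Q^r_k ≤ γ + δ + 1` for all `k ≥ 1`. -/
theorem stmt_6 (d : ℤ) (hd : 1 ≤ d) (p : ℝ) (hp0 : 0 ≤ p) (hp1 : p ≤ 1) (q0 : ℕ)
    (γ δ : ℝ) (hγ : 0 ≤ γ) (hδ : 0 ≤ δ)
    (S C X Qr Qhat : ℤ → ℝ)
    (hS : ∀ k, S k = 0 ∨ S k = 1)
    (hC : ∀ k, C k = 0 ∨ C k = 1)
    (hX : ∀ k, X k = 0 ∨ X k = 1)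
    (hSC : ∀ k, S k + C k ≤ 1)
    (hS0 : ∀ j ≤ (0 : ℤ), S j = 0)
    (hC0 : ∀ j ≤ (0 : ℤ), C j = 0)
    (hX0 : ∀ j ≤ (0 : ℤ), X j = 0)
    (hQinit : ∀ j ≤ (1 : ℤ), Qr j = (q0 : ℝ))
    (hQrec : ∀ k ≥ (1 : ℤ), Qr (k + 1) = max 0 (Qr k + S k * X k - C k * (1 - X k)))
    (hQhat : ∀ k ≥ (1 : ℤ),
      Qhat k = Qr (k - d) + ∑ j ∈ Finset.Ico (k - d) k, (S j * p - C j * (1 - p)))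
    (hpolC : ∀ k ≥ (1 : ℤ), C k = if γ < Qhat k then 1 else 0)
    (hpolS : ∀ k ≥ (1 : ℤ), S k = 1 - C k)
    (k0 : ℤ) (hk0 : 1 ≤ k0)
    (hacc : ∀ k ≥ k0, Qr k - Qhat k ≤ δ)
    (hstart : Qhat k0 ≤ γ + 1) :
    (∀ k ≥ k0, 0 ≤ Qr k ∧ Qr k ≤ γ + δ + 1) ∧
    (q0 = 0 → (∀ k ≥ (1 : ℤ), Qr k - Qhat k ≤ δ) →
      ∀ k ≥ (1 : ℤ), 0 ≤ Qr k ∧ Qr k ≤ γ + δ + 1) :=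
  stmt_6_general d hd p q0 γ δ hγ S C X Qr Qhat hX hS0 hC0 hQinit hQrec hQhat hpolC hpolS k0 hk0
    hacc hstart
end

section
/- Let (X_k)_{k≥1} be independent, identically distributed Bernoulli(p) random variables on a probability space with 0 < p < 1, and let the processes S, C, Q^r, Q̂^r be defined pathwise from X by the threshold-γ policy with an arbitrary nonnegative integer initial condition q0. Let δ ≥ 0. Then for almost every sample path on which Q^r_k − Q̂^r_k ≤ δ holds for all k ≥ 1, there exists K such that 0 ≤ Q^r_k ≤ γ + δ + 1 for all k ≥ K. -/
open MeasureTheory ProbabilityTheory Filter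

/-! While the queue exceeds `γ + δ`, the estimator exceeds `γ` (it underestimates the queue by
at most `δ`), so a coded packet is sent and the queue cannot grow; every erasure-free slot then
lowers it by one. By independence, almost surely infinitely many slots are erasure-free, so the
nonnegative queue must fall to `γ + δ + 1`, and since it grows by at most one per slot it never
exceeds that bound again. -/

namespace ProbabilityTheory

theorem iIndepFun.measure_setOf_forall_ge_mem_eq_zero {Ω β : Type*} [MeasurableSpace Ω]
    [MeasurableSpace β] {μ : Measure Ω} {X : ℤ → Ω → β} (hX : iIndepFun X μ) {s : Set β}
    (hs : MeasurableSet s) {r : ENNReal} (hr : r < 1) {N : ℤ}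
    (hμ : ∀ k ≥ N, μ (X k ⁻¹' s) ≤ r) :
    μ {ω | ∀ k ≥ N, X k ω ∈ s} = 0 := by
  have hpow (m : ℕ) : μ {ω | ∀ k ≥ N, X k ω ∈ s} ≤ r ^ m :=
    calc μ {ω | ∀ k ≥ N, X k ω ∈ s}
        ≤ μ (⋂ k ∈ Finset.Ico N (N + m), X k ⁻¹' s) :=
          measure_mono fun ω hω => Set.mem_iInter₂.mpr fun k hk => hω k (Finset.mem_Ico.mp hk).1
      _ = ∏ k ∈ Finset.Ico N (N + m), μ (X k ⁻¹' s) :=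
          hX.meas_biInter fun _ _ => ⟨s, hs, rfl⟩
      _ ≤ ∏ _k ∈ Finset.Ico N (N + m), r :=
          Finset.prod_le_prod' fun k hk => hμ k (Finset.mem_Ico.mp hk).1
      _ = r ^ m := by simp
  exact nonpos_iff_eq_zero.mp <|
    ge_of_tendsto' (ENNReal.tendsto_pow_atTop_nhds_zero_of_lt_one hr) hpow

theorem iIndepFun.ae_frequently_notMem {Ω β : Type*} [MeasurableSpace Ω]
    [MeasurableSpace β] {μ : Measure Ω} {X : ℤ → Ω → β} (hX : iIndepFun X μ) {s : Set β}
    (hs : MeasurableSet s) {r : ENNReal} (hr : r < 1)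
    (hμ : ∀ᶠ k in atTop, μ (X k ⁻¹' s) ≤ r) :
    ∀ᵐ ω ∂μ, ∃ᶠ k in atTop, X k ω ∉ s := by
  obtain ⟨N₀, hN₀⟩ := eventually_atTop.mp hμ
  simp only [frequently_atTop]
  refine ae_all_iff.mpr fun N => ae_iff.mpr <| measure_mono_null ?_ <|
    hX.measure_setOf_forall_ge_mem_eq_zero hs hr (N := max N N₀)
      fun k hk => hN₀ k (le_of_max_le_right hk)
  intro ω hω k hk
  by_contra hks
  exact hω ⟨k, le_of_max_le_left hk, hks⟩

end ProbabilityTheory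

section ReflectedWalk

variable {Q u : ℤ → ℝ} {c : ℝ} {n : ℤ}

theorem reflectedWalk_succ_le_self (hnn : ∀ k ≥ n, 0 ≤ Q k)
    (hrec : ∀ k ≥ n, Q (k + 1) = max 0 (Q k + u k)) (hdrift : ∀ k ≥ n, c < Q k → u k ≤ 0)
    {k : ℤ} (hk : n ≤ k) (hQ : c < Q k) : Q (k + 1) ≤ Q k := by
  rw [hrec k hk]
  exact max_le (hnn k hk) (by linarith [hdrift k hk hQ])

theorem reflectedWalk_succ_le_of_le (hc : 0 ≤ c + 1) (hnn : ∀ k ≥ n, 0 ≤ Q k)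
    (hrec : ∀ k ≥ n, Q (k + 1) = max 0 (Q k + u k)) (hdrift : ∀ k ≥ n, c < Q k → u k ≤ 0)
    (hu : ∀ k ≥ n, u k ≤ 1) {k : ℤ} (hk : n ≤ k) (hQ : Q k ≤ c + 1) : Q (k + 1) ≤ c + 1 := by
  rcases lt_or_ge c (Q k) with hcQ | hQc
  · exact (reflectedWalk_succ_le_self hnn hrec hdrift hk hcQ).trans hQ
  · rw [hrec k hk]
    exact max_le hc (by linarith [hu k hk])

theorem reflectedWalk_exists_le (hc : 0 ≤ c + 1) (hnn : ∀ k ≥ n, 0 ≤ Q k)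
    (hrec : ∀ k ≥ n, Q (k + 1) = max 0 (Q k + u k)) (hdrift : ∀ k ≥ n, c < Q k → u k ≤ 0)
    (hfreq : ∃ᶠ k in atTop, c < Q k → u k ≤ -1) : ∃ k ≥ n, Q k ≤ c + 1 := by
  by_contra! habove
  have hanti (k : ℤ) (hk : n ≤ k) : ∀ i ≥ k, Q i ≤ Q k :=
    Int.leInduction le_rfl fun i hi ih =>
      (reflectedWalk_succ_le_self hnn hrec hdrift (hk.trans hi)
        (by linarith [habove i (hk.trans hi)])).trans ih
  have hdrop (m : ℕ) : ∃ k ≥ n, Q k ≤ Q n - m := by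
    induction m with
    | zero => exact ⟨n, le_rfl, by simp⟩
    | succ m ih =>
      obtain ⟨k, hk, hQk⟩ := ih
      obtain ⟨i, hki, hi⟩ := frequently_atTop.mp hfreq k
      have hni : n ≤ i := hk.trans hki
      have hui : u i ≤ -1 := hi (by linarith [habove i hni])
      have hpos : 0 ≤ Q i + u i := by
        have h := habove (i + 1) (by omega)
        rw [hrec i hni] at h
        rcases lt_max_iff.mp h with h | h <;> linarith
      refine ⟨i + 1, by omega, ?_⟩
      rw [hrec i hni, max_eq_right hpos]
      push_cast
      linarith [hanti k hk i hki]
  obtain ⟨k, hk, hQk⟩ := hdrop (⌈Q n⌉₊ + 1)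
  push_cast at hQk
  linarith [hnn k hk, Nat.le_ceil (Q n)]

theorem reflectedWalk_eventually_mem_Icc (hc : 0 ≤ c + 1) (hnn : ∀ k ≥ n, 0 ≤ Q k)
    (hrec : ∀ k ≥ n, Q (k + 1) = max 0 (Q k + u k)) (hdrift : ∀ k ≥ n, c < Q k → u k ≤ 0)
    (hu : ∀ k ≥ n, u k ≤ 1) (hfreq : ∃ᶠ k in atTop, c < Q k → u k ≤ -1) :
    ∃ K : ℤ, ∀ k ≥ K, 0 ≤ Q k ∧ Q k ≤ c + 1 := by
  obtain ⟨K, hK, hQK⟩ := reflectedWalk_exists_le hc hnn hrec hdrift hfreq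
  exact ⟨K, Int.leInduction ⟨hnn K hK, hQK⟩ fun k hk ih =>
    ⟨hnn (k + 1) (by omega),
      reflectedWalk_succ_le_of_le hc hnn hrec hdrift hu (hK.trans hk) ih.2⟩⟩

end ReflectedWalk

theorem stmt_7_general {Ω : Type*} [MeasurableSpace Ω] (μ : Measure Ω)
    (p : ℝ) (hp1 : p < 1)
    (γ δ : ℝ) (hγ : 0 ≤ γ) (hδ : 0 ≤ δ)
    (S C X Qr Qhat : ℤ → Ω → ℝ)
    (hXv : ∀ k ω, X k ω = 0 ∨ X k ω = 1)
    (hQrec : ∀ k ≥ (1 : ℤ), ∀ ω,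
      Qr (k + 1) ω = max 0 (Qr k ω + S k ω * X k ω - C k ω * (1 - X k ω)))
    (hpolC : ∀ k ≥ (1 : ℤ), ∀ ω, C k ω = if γ < Qhat k ω then 1 else 0)
    (hpolS : ∀ k ≥ (1 : ℤ), ∀ ω, S k ω = 1 - C k ω)
    (hXindep : iIndepFun X μ)
    (hXbern : ∀ k ≥ (1 : ℤ), μ {ω | X k ω = 1} = ENNReal.ofReal p) :
    ∀ᵐ ω ∂μ, (∀ k ≥ (1 : ℤ), Qr k ω - Qhat k ω ≤ δ) →
      ∃ K : ℤ, ∀ k ≥ K, 0 ≤ Qr k ω ∧ Qr k ω ≤ γ + δ + 1 := by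
  filter_upwards [hXindep.ae_frequently_notMem (measurableSet_singleton 1)
    (ENNReal.ofReal_lt_one.mpr hp1) (eventually_atTop.mpr ⟨1, fun k hk => (hXbern k hk).le⟩)]
    with ω hfreq hacc
  set u : ℤ → ℝ := fun k => S k ω * X k ω - C k ω * (1 - X k ω)
  have hrec (k : ℤ) (hk : 1 ≤ k) : Qr (k + 1) ω = max 0 (Qr k ω + u k) := by
    rw [hQrec k hk ω, add_sub_assoc]
  have hu (k : ℤ) (hk : 1 ≤ k) : u k = if γ < Qhat k ω then X k ω - 1 else X k ω := by
    simp only [u, hpolS k hk, hpolC k hk]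
    split_ifs <;> ring
  have hcoded (k : ℤ) (hk : 1 ≤ k) (hQ : γ + δ < Qr k ω) : u k = X k ω - 1 := by
    rw [hu k hk, if_pos (by linarith [hacc k hk])]
  have hX1 (k : ℤ) : X k ω ≤ 1 := by rcases hXv k ω with h | h <;> norm_num [h]
  refine reflectedWalk_eventually_mem_Icc (n := 2) (by linarith)
    (fun k hk => ?_) (fun k hk => hrec k (by omega))
    (fun k hk hQ => by linarith [hcoded k (by omega) hQ, hX1 k])
    (fun k hk => by rw [hu k (by omega)]; split_ifs <;> linarith [hX1 k])
    ((hfreq.and_eventually (eventually_ge_atTop 1)).mono fun k hk hQ => ?_)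
  · rw [← sub_add_cancel k 1, hrec (k - 1) (by omega)]
    exact le_max_left _ _
  · rw [hcoded k hk.2 hQ, (hXv k ω).resolve_right hk.1]
    norm_num

/-- Almost-sure convergence of the receiver virtual queue under the threshold-`γ`
policy with i.i.d. Bernoulli(`p`) erasures, `0 < p < 1`: for almost every sample
path on which the estimator is accurate within `δ` for all slots `k ≥ 1`, the
queue eventually enters and stays in the interval `[0, γ + δ + 1]`. -/
theorem stmt_7 {Ω : Type*} [MeasurableSpace Ω] (μ : Measure Ω) [IsProbabilityMeasure μ]
    (d : ℤ) (hd : 1 ≤ d) (p : ℝ) (hp0 : 0 < p) (hp1 : p < 1) (q0 : ℕ)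
    (γ δ : ℝ) (hγ : 0 ≤ γ) (hδ : 0 ≤ δ)
    (S C X Qr Qhat : ℤ → Ω → ℝ)
    (hS : ∀ k ω, S k ω = 0 ∨ S k ω = 1)
    (hC : ∀ k ω, C k ω = 0 ∨ C k ω = 1)
    (hXv : ∀ k ω, X k ω = 0 ∨ X k ω = 1)
    (hSC : ∀ k ω, S k ω + C k ω ≤ 1)
    (hS0 : ∀ j ≤ (0 : ℤ), ∀ ω, S j ω = 0)
    (hC0 : ∀ j ≤ (0 : ℤ), ∀ ω, C j ω = 0)
    (hX0 : ∀ j ≤ (0 : ℤ), ∀ ω, X j ω = 0)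
    (hQinit : ∀ j ≤ (1 : ℤ), ∀ ω, Qr j ω = (q0 : ℝ))
    (hQrec : ∀ k ≥ (1 : ℤ), ∀ ω,
      Qr (k + 1) ω = max 0 (Qr k ω + S k ω * X k ω - C k ω * (1 - X k ω)))
    (hQhat : ∀ k ≥ (1 : ℤ), ∀ ω,
      Qhat k ω = Qr (k - d) ω + ∑ j ∈ Finset.Ico (k - d) k, (S j ω * p - C j ω * (1 - p)))
    (hpolC : ∀ k ≥ (1 : ℤ), ∀ ω, C k ω = if γ < Qhat k ω then 1 else 0)
    (hpolS : ∀ k ≥ (1 : ℤ), ∀ ω, S k ω = 1 - C k ω)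
    (hXmeas : ∀ k, Measurable (X k))
    (hXindep : iIndepFun X μ)
    (hXbern : ∀ k ≥ (1 : ℤ), μ {ω | X k ω = 1} = ENNReal.ofReal p) :
    ∀ᵐ ω ∂μ, (∀ k ≥ (1 : ℤ), Qr k ω - Qhat k ω ≤ δ) →
      ∃ K : ℤ, ∀ k ≥ K, 0 ≤ Qr k ω ∧ Qr k ω ≤ γ + δ + 1 :=
  stmt_7_general μ p hp1 γ δ hγ hδ S C X Qr Qhat hXv hQrec hpolC hpolS hXindep hXbern
end

section
/- Fix k ≥ 1 and suppose the sequences S, C, X are random variables on a probability space whose sample paths satisfy the queue and estimator definitions, such that X_{k−d} has mean p and is independent of the pair (S_{k−d}, C_{k−d}). Then E[Q̂^r_{k+1}] ≥ E[Q̂^r_k] + p·E[S_k] − (1−p)·E[C_k]. -/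
/-!
With `m = k - d` and `L j = p S_j - (1 - p) C_j`, the estimator telescopes:
`Q̂_{k+1} - Q̂_k = (Q_{m+1} - Q_m) + L k - L m`. Dropping the `max 0` in the queue recursion gives
`Q_{m+1} - Q_m ≥ S_m X_m - C_m (1 - X_m)` pointwise, and since `X_m` has mean `p` and is independent
of `(S_m, C_m)`, the expectation of the right-hand side is exactly `E[L m]`, which cancels.
-/

open MeasureTheory ProbabilityTheory

theorem Finset.sum_Ico_add_one_add_one {α M : Type*} [LinearOrder α] [LocallyFiniteOrder α]
    [AddMonoidWithOne α] [SuccAddOrder α] [NoMaxOrder α] [AddCommGroup M]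
    (f : α → M) {a b : α} (hab : a ≤ b) :
    ∑ j ∈ Ico (a + 1) (b + 1), f j = ∑ j ∈ Ico a b, f j + f b - f a := by
  rw [Finset.sum_Ico_add_eq_sum_Ico_add_one hab, ← Finset.insert_Ico_add_one_left_eq_Ico
    (hab.trans_lt (Order.lt_add_one_iff.mpr le_rfl)), Finset.sum_insert (by simp)]
  abel

lemma integrable_of_eq_zero_or_eq_one {Ω : Type*} [MeasurableSpace Ω] {μ : Measure Ω}
    [IsFiniteMeasure μ] {f : Ω → ℝ} (hf : Measurable f)
    (h01 : ∀ ω, f ω = 0 ∨ f ω = 1) : Integrable f μ :=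
  .of_bound hf.aestronglyMeasurable 1 <| ae_of_all _ fun ω => by rcases h01 ω with h | h <;> simp [h]

lemma integral_mul_sub_mul_one_sub_of_indepFun {Ω : Type*} [MeasurableSpace Ω] {μ : Measure Ω}
    [IsProbabilityMeasure μ] {s c x : Ω → ℝ} {p : ℝ}
    (hs : Integrable s μ) (hc : Integrable c μ) (hx : Integrable x μ)
    (hind : IndepFun x (fun ω => (s ω, c ω)) μ) (hmean : ∫ ω, x ω ∂μ = p) :
    ∫ ω, (s ω * x ω - c ω * (1 - x ω)) ∂μ = p * ∫ ω, s ω ∂μ - (1 - p) * ∫ ω, c ω ∂μ := by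
  have hxs : IndepFun x s μ := hind.comp measurable_id measurable_fst
  have hxc : IndepFun x c μ := hind.comp measurable_id measurable_snd
  calc ∫ ω, (s ω * x ω - c ω * (1 - x ω)) ∂μ
      = ∫ ω, (x ω * s ω + x ω * c ω - c ω) ∂μ := by congr 1; ext ω; ring
    _ = (∫ ω, x ω * s ω ∂μ) + (∫ ω, x ω * c ω ∂μ) - ∫ ω, c ω ∂μ := by
      have hxs_int : Integrable (fun ω => x ω * s ω) μ := hxs.integrable_mul hx hs
      have hxc_int : Integrable (fun ω => x ω * c ω) μ := hxc.integrable_mul hx hc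
      rw [integral_sub ?_ hc, integral_add hxs_int hxc_int]
      exact hxs_int.add hxc_int
    _ = p * ∫ ω, s ω ∂μ - (1 - p) * ∫ ω, c ω ∂μ := by
      rw [hxs.integral_fun_mul_eq_mul_integral hx.1 hs.1,
        hxc.integral_fun_mul_eq_mul_integral hx.1 hc.1, hmean]
      ring

section Lindley

variable {Ω : Type*} {Q A : ℤ → Ω → ℝ} {c : ℝ}

lemma lindley_increment_ge (hinit : ∀ j ≤ (1 : ℤ), ∀ ω, Q j ω = c)
    (hrec : ∀ n ≥ (1 : ℤ), ∀ ω, Q (n + 1) ω = max 0 (Q n ω + A n ω))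
    (hA : ∀ n ≤ (0 : ℤ), ∀ ω, A n ω ≤ 0) (n : ℤ) (ω : Ω) :
    A n ω ≤ Q (n + 1) ω - Q n ω := by
  rcases le_or_gt n 0 with hn | hn
  · rw [hinit (n + 1) (by omega), hinit n (by omega), sub_self]
    exact hA n hn ω
  · rw [hrec n hn ω]
    linarith [le_max_right 0 (Q n ω + A n ω)]

variable [MeasurableSpace Ω] {μ : Measure Ω} [IsFiniteMeasure μ]

lemma integrable_lindley (hinit : ∀ j ≤ (1 : ℤ), ∀ ω, Q j ω = c)
    (hrec : ∀ n ≥ (1 : ℤ), ∀ ω, Q (n + 1) ω = max 0 (Q n ω + A n ω))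
    (hA : ∀ n, Integrable (A n) μ) (j : ℤ) : Integrable (Q j) μ := by
  have hconst : ∀ j ≤ (1 : ℤ), Integrable (Q j) μ := fun j hj => by
    rw [funext (hinit j hj)]; exact integrable_const c
  have hpos : ∀ n ≥ (1 : ℤ), Integrable (Q n) μ := by
    intro n hn
    induction n, hn using Int.leInduction with
    | base => exact hconst 1 le_rfl
    | succ n hn ih =>
      rw [funext (hrec n hn)]
      exact (integrable_zero _ _ _).sup (ih.add (hA n))
  exact (le_or_gt j 1).elim (hconst j) fun hj => hpos j hj.le

end Lindley

lemma estimator_succ {Ω : Type*} {Qr Qhat L : ℤ → Ω → ℝ} {d : ℤ} (hd : 0 ≤ d)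
    (hQhat : ∀ k ≥ (1 : ℤ), ∀ ω, Qhat k ω = Qr (k - d) ω + ∑ j ∈ Finset.Ico (k - d) k, L j ω)
    {k : ℤ} (hk : 1 ≤ k) (ω : Ω) :
    Qhat (k + 1) ω = Qhat k ω + (Qr (k - d + 1) ω - Qr (k - d) ω) + (L k ω - L (k - d) ω) := by
  rw [hQhat (k + 1) (by omega), hQhat k hk, show k + 1 - d = k - d + 1 by ring,
    Finset.sum_Ico_add_one_add_one _ (by omega : k - d ≤ k)]
  ring

lemma integral_estimator_succ_ge {Ω : Type*} [MeasurableSpace Ω] {μ : Measure Ω}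
    {Qr Qhat L : ℤ → Ω → ℝ} {A : Ω → ℝ} {d : ℤ} (hd : 0 ≤ d)
    (hQhat : ∀ k ≥ (1 : ℤ), ∀ ω, Qhat k ω = Qr (k - d) ω + ∑ j ∈ Finset.Ico (k - d) k, L j ω)
    {k : ℤ} (hk : 1 ≤ k) (hQr : ∀ j, Integrable (Qr j) μ) (hL : ∀ j, Integrable (L j) μ)
    (hA : Integrable A μ) (hA_le : ∀ ω, A ω ≤ Qr (k - d + 1) ω - Qr (k - d) ω) :
    (∫ ω, Qhat k ω ∂μ) + (∫ ω, A ω ∂μ) + ((∫ ω, L k ω ∂μ) - ∫ ω, L (k - d) ω ∂μ)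
      ≤ ∫ ω, Qhat (k + 1) ω ∂μ := by
  have hQhat_int : ∀ j ≥ (1 : ℤ), Integrable (Qhat j) μ := fun j hj => by
    rw [funext (hQhat j hj)]
    exact (hQr _).add (integrable_finsetSum _ fun i _ => hL i)
  have hpointwise ω : A ω + (L k ω - L (k - d) ω) ≤ Qhat (k + 1) ω - Qhat k ω := by
    rw [estimator_succ hd hQhat hk ω]
    linarith [hA_le ω]
  have hmono := integral_mono (hA.add ((hL k).sub (hL _)))
    ((hQhat_int (k + 1) (by omega)).sub (hQhat_int k hk)) hpointwise
  simp only [Pi.add_apply, Pi.sub_apply] at hmono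
  rw [integral_add hA ?_, integral_sub (hL k) (hL _),
    integral_sub (hQhat_int (k + 1) (by omega)) (hQhat_int k hk)] at hmono
  · linarith
  · exact (hL k).sub (hL _)

theorem stmt_8_general {Ω : Type*} [MeasurableSpace Ω] (μ : Measure Ω) [IsProbabilityMeasure μ]
    (d : ℤ) (hd : 1 ≤ d) (p : ℝ) (q0 : ℕ)
    (S C X Qr Qhat : ℤ → Ω → ℝ)
    (hS : ∀ k ω, S k ω = 0 ∨ S k ω = 1)
    (hC : ∀ k ω, C k ω = 0 ∨ C k ω = 1)
    (hXv : ∀ k ω, X k ω = 0 ∨ X k ω = 1)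
    (hS0 : ∀ j ≤ (0 : ℤ), ∀ ω, S j ω = 0)
    (hC0 : ∀ j ≤ (0 : ℤ), ∀ ω, C j ω = 0)
    (hQinit : ∀ j ≤ (1 : ℤ), ∀ ω, Qr j ω = (q0 : ℝ))
    (hQrec : ∀ k ≥ (1 : ℤ), ∀ ω,
      Qr (k + 1) ω = max 0 (Qr k ω + S k ω * X k ω - C k ω * (1 - X k ω)))
    (hQhat : ∀ k ≥ (1 : ℤ), ∀ ω,
      Qhat k ω = Qr (k - d) ω + ∑ j ∈ Finset.Ico (k - d) k, (S j ω * p - C j ω * (1 - p)))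
    (hmeasS : ∀ j, Measurable (S j))
    (hmeasC : ∀ j, Measurable (C j))
    (hmeasX : ∀ j, Measurable (X j))
    (k : ℤ) (hk : 1 ≤ k)
    (hXmean : ∫ ω, X (k - d) ω ∂μ = p)
    (hXindep : IndepFun (X (k - d)) (fun ω => (S (k - d) ω, C (k - d) ω)) μ) :
    (∫ ω, Qhat k ω ∂μ) + p * (∫ ω, S k ω ∂μ) - (1 - p) * (∫ ω, C k ω ∂μ)
      ≤ ∫ ω, Qhat (k + 1) ω ∂μ := by
  have hrec : ∀ n ≥ (1 : ℤ), ∀ ω, Qr (n + 1) ω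
      = max 0 (Qr n ω + (S n ω * X n ω - C n ω * (1 - X n ω))) := fun n hn ω => by
    rw [hQrec n hn ω, add_sub_assoc]
  have hS_int j := integrable_of_eq_zero_or_eq_one (μ := μ) (hmeasS j) (hS j)
  have hC_int j := integrable_of_eq_zero_or_eq_one (μ := μ) (hmeasC j) (hC j)
  have hX_int j := integrable_of_eq_zero_or_eq_one (μ := μ) (hmeasX j) (hXv j)
  have hA_int j : Integrable (fun ω => S j ω * X j ω - C j ω * (1 - X j ω)) μ := by
    have hX ω : ‖X j ω‖ ≤ 1 ∧ ‖1 - X j ω‖ ≤ 1 := by rcases hXv j ω with h | h <;> simp [h]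
    exact ((hS_int j).mul_bdd (hmeasX j).aestronglyMeasurable (ae_of_all _ fun ω => (hX ω).1)).sub
      ((hC_int j).mul_bdd (measurable_const.sub (hmeasX j)).aestronglyMeasurable
        (ae_of_all _ fun ω => (hX ω).2))
  have hL_int j : Integrable (fun ω => S j ω * p - C j ω * (1 - p)) μ :=
    ((hS_int j).mul_const p).sub ((hC_int j).mul_const (1 - p))
  have hL_integral j : ∫ ω, (S j ω * p - C j ω * (1 - p)) ∂μ
      = p * ∫ ω, S j ω ∂μ - (1 - p) * ∫ ω, C j ω ∂μ := by
    rw [integral_sub ((hS_int j).mul_const p) ((hC_int j).mul_const (1 - p)),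
      integral_mul_const, integral_mul_const]
    ring
  have hA_le := lindley_increment_ge hQinit hrec fun n hn ω => by simp [hS0 n hn ω, hC0 n hn ω]
  have key := integral_estimator_succ_ge (by omega) hQhat hk (integrable_lindley hQinit hrec hA_int)
    hL_int (hA_int (k - d)) (hA_le (k - d))
  rw [hL_integral, hL_integral,
    integral_mul_sub_mul_one_sub_of_indepFun (hS_int _) (hC_int _) (hX_int _) hXindep hXmean] at key
  linarith

/-- Expected drift of the estimator: if `X_{k−d}` has mean `p` and is independent
of the pair `(S_{k−d}, C_{k−d})`, then
`E[Q̂^r_{k+1}] ≥ E[Q̂^r_k] + p·E[S_k] − (1−p)·E[C_k]`. -/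
theorem stmt_8 {Ω : Type*} [MeasurableSpace Ω] (μ : Measure Ω) [IsProbabilityMeasure μ]
    (d : ℤ) (hd : 1 ≤ d) (p : ℝ) (hp0 : 0 ≤ p) (hp1 : p ≤ 1) (q0 : ℕ)
    (S C X Qr Qhat : ℤ → Ω → ℝ)
    (hS : ∀ k ω, S k ω = 0 ∨ S k ω = 1)
    (hC : ∀ k ω, C k ω = 0 ∨ C k ω = 1)
    (hXv : ∀ k ω, X k ω = 0 ∨ X k ω = 1)
    (hSC : ∀ k ω, S k ω + C k ω ≤ 1)
    (hS0 : ∀ j ≤ (0 : ℤ), ∀ ω, S j ω = 0)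
    (hC0 : ∀ j ≤ (0 : ℤ), ∀ ω, C j ω = 0)
    (hX0 : ∀ j ≤ (0 : ℤ), ∀ ω, X j ω = 0)
    (hQinit : ∀ j ≤ (1 : ℤ), ∀ ω, Qr j ω = (q0 : ℝ))
    (hQrec : ∀ k ≥ (1 : ℤ), ∀ ω,
      Qr (k + 1) ω = max 0 (Qr k ω + S k ω * X k ω - C k ω * (1 - X k ω)))
    (hQhat : ∀ k ≥ (1 : ℤ), ∀ ω,
      Qhat k ω = Qr (k - d) ω + ∑ j ∈ Finset.Ico (k - d) k, (S j ω * p - C j ω * (1 - p)))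
    (hmeasS : ∀ j, Measurable (S j))
    (hmeasC : ∀ j, Measurable (C j))
    (hmeasX : ∀ j, Measurable (X j))
    (k : ℤ) (hk : 1 ≤ k)
    (hXmean : ∫ ω, X (k - d) ω ∂μ = p)
    (hXindep : IndepFun (X (k - d)) (fun ω => (S (k - d) ω, C (k - d) ω)) μ) :
    (∫ ω, Qhat k ω ∂μ) + p * (∫ ω, S k ω ∂μ) - (1 - p) * (∫ ω, C k ω ∂μ)
      ≤ ∫ ω, Qhat (k + 1) ω ∂μ :=
  stmt_8_general μ d hd p q0 S C X Qr Qhat hS hC hXv hS0 hC0 hQinit hQrec hQhat hmeasS hmeasC hmeasX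
    k hk hXmean hXindep
end

section
/- Fix k ≥ 1 and suppose the threshold-γ policy is used, with the randomness coming from the erasure sequence X. Let F be a sub-σ-algebra of the probability space such that S_j and C_j for all j ≤ k and Q^r_j for all j ≤ k − d are F-measurable (hence Q̂^r_k is F-measurable), and such that X_{k−d} is independent of F and has mean p. Then almost surely: on the event {Q̂^r_k ≤ γ} one has E[Q̂^r_{k+1} | F] ≥ Q̂^r_k + p, and on the event {Q̂^r_k > γ} one has E[Q̂^r_{k+1} | F] ≥ Q̂^r_k − (1−p). -/
open MeasureTheory ProbabilityTheory

/-- Conditional expected drift of the estimator under the threshold-`γ` policy: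
given a sub-σ-algebra `F` rendering the past measurable, with `X_{k−d}`
independent of `F` and of mean `p`, almost surely
`E[Q̂^r_{k+1} | F] ≥ Q̂^r_k + p` on `{Q̂^r_k ≤ γ}` and
`E[Q̂^r_{k+1} | F] ≥ Q̂^r_k − (1−p)` on `{Q̂^r_k > γ}`. -/
theorem stmt_9 {Ω : Type*} (F : MeasurableSpace Ω) [mΩ : MeasurableSpace Ω] (μ : Measure Ω) [IsProbabilityMeasure μ]
    (d : ℤ) (hd : 1 ≤ d) (p : ℝ) (hp0 : 0 ≤ p) (hp1 : p ≤ 1) (q0 : ℕ)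
    (γ : ℝ) (hγ : 0 ≤ γ)
    (S C X Qr Qhat : ℤ → Ω → ℝ)
    (hS : ∀ j ω, S j ω = 0 ∨ S j ω = 1)
    (hC : ∀ j ω, C j ω = 0 ∨ C j ω = 1)
    (hXv : ∀ j ω, X j ω = 0 ∨ X j ω = 1)
    (hSC : ∀ j ω, S j ω + C j ω ≤ 1)
    (hS0 : ∀ j ≤ (0 : ℤ), ∀ ω, S j ω = 0)
    (hC0 : ∀ j ≤ (0 : ℤ), ∀ ω, C j ω = 0)
    (hX0 : ∀ j ≤ (0 : ℤ), ∀ ω, X j ω = 0)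
    (hQinit : ∀ j ≤ (1 : ℤ), ∀ ω, Qr j ω = (q0 : ℝ))
    (hQrec : ∀ j ≥ (1 : ℤ), ∀ ω,
      Qr (j + 1) ω = max 0 (Qr j ω + S j ω * X j ω - C j ω * (1 - X j ω)))
    (hQhat : ∀ j ≥ (1 : ℤ), ∀ ω,
      Qhat j ω = Qr (j - d) ω + ∑ i ∈ Finset.Ico (j - d) j, (S i ω * p - C i ω * (1 - p)))
    (hpolC : ∀ j ≥ (1 : ℤ), ∀ ω, C j ω = if γ < Qhat j ω then 1 else 0)
    (hpolS : ∀ j ≥ (1 : ℤ), ∀ ω, S j ω = 1 - C j ω)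
    (k : ℤ) (hk : 1 ≤ k)
    (hF : F ≤ mΩ)
    (hFS : ∀ j ≤ k, Measurable[F] (S j) ∧ Measurable[F] (C j))
    (hFQ : ∀ j ≤ k - d, Measurable[F] (Qr j))
    (hXmeas : Measurable (X (k - d)))
    (hXmean : ∫ ω, X (k - d) ω ∂μ = p)
    (hXindep : Indep (MeasurableSpace.comap (X (k - d)) inferInstance) F μ) :
    ∀ᵐ ω ∂μ,
      (Qhat k ω ≤ γ → Qhat k ω + p ≤ (μ[Qhat (k + 1)|F]) ω) ∧
      (γ < Qhat k ω → Qhat k ω - (1 - p) ≤ (μ[Qhat (k + 1)|F]) ω) := by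
  -- basic value facts
  have hS01 : ∀ j ω, 0 ≤ S j ω ∧ S j ω ≤ 1 := fun j ω => by
    rcases hS j ω with h | h <;> rw [h] <;> norm_num
  have hC01 : ∀ j ω, 0 ≤ C j ω ∧ C j ω ≤ 1 := fun j ω => by
    rcases hC j ω with h | h <;> rw [h] <;> norm_num
  have hX01 : ∀ j ω, 0 ≤ X j ω ∧ X j ω ≤ 1 := fun j ω => by
    rcases hXv j ω with h | h <;> rw [h] <;> norm_num
  have hterm : ∀ j ω, |S j ω * p - C j ω * (1 - p)| ≤ 1 := fun j ω => by
    rcases hS j ω with h | h <;> rcases hC j ω with h' | h' <;>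
      rw [h, h', abs_le] <;> constructor <;> nlinarith
  -- bounds on Qr
  have hQnat : ∀ n : ℕ, ∀ j : ℤ, j = 1 + n → ∀ ω, 0 ≤ Qr j ω ∧ Qr j ω ≤ q0 + n := by
    intro n
    induction n with
    | zero =>
      intro j hj ω
      rw [hQinit j (by omega) ω]
      constructor <;> simp
    | succ n ih =>
      intro j hj ω
      have hj' : j = (1 + (n : ℤ)) + 1 := by push_cast; omega
      rw [hj', hQrec (1 + (n : ℤ)) (by omega) ω]
      obtain ⟨ih0, ih1⟩ := ih (1 + (n : ℤ)) rfl ω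
      constructor
      · exact le_max_left 0 _
      · have h1 := hS01 (1 + (n : ℤ)) ω
        have h2 := hC01 (1 + (n : ℤ)) ω
        have h3 := hX01 (1 + (n : ℤ)) ω
        have : Qr (1 + (n : ℤ)) ω + S (1 + (n : ℤ)) ω * X (1 + (n : ℤ)) ω -
            C (1 + (n : ℤ)) ω * (1 - X (1 + (n : ℤ)) ω) ≤ q0 + (n + 1 : ℕ) := by
          push_cast
          nlinarith
        have h0 : (0 : ℝ) ≤ q0 + (n + 1 : ℕ) := by positivity
        exact max_le h0 this
  have hQbd : ∀ j : ℤ, ∀ ω, 0 ≤ Qr j ω ∧ Qr j ω ≤ q0 + ((j - 1).toNat : ℝ) := by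
    intro j ω
    rcases le_or_gt j 1 with h | h
    · rw [hQinit j h ω]
      constructor
      · positivity
      · exact le_add_of_nonneg_right (by positivity)
    · exact hQnat (j - 1).toNat j (by omega) ω
  -- generic bound on Qhat
  have hQhatBd : ∀ j : ℤ, 1 ≤ j → ∀ ω,
      |Qhat j ω| ≤ (q0 : ℝ) + ((j - d - 1).toNat : ℝ) + ((Finset.Ico (j - d) j).card : ℝ) := by
    intro j hj ω
    rw [hQhat j hj ω]
    have h1 := hQbd (j - d) ω
    have h2 : |∑ i ∈ Finset.Ico (j - d) j, (S i ω * p - C i ω * (1 - p))| ≤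
        ((Finset.Ico (j - d) j).card : ℝ) * 1 := by
      refine (Finset.abs_sum_le_sum_abs _ _).trans ?_
      have := Finset.sum_le_card_nsmul (Finset.Ico (j - d) j)
        (fun i => |S i ω * p - C i ω * (1 - p)|) 1 (fun i _ => hterm i ω)
      simpa [nsmul_eq_mul] using this
    have h3 := abs_add_le (Qr (j - d) ω)
      (∑ i ∈ Finset.Ico (j - d) j, (S i ω * p - C i ω * (1 - p)))
    rw [abs_of_nonneg h1.1] at h3
    have h4 := h1.2
    linarith
  -- measurability (ambient)
  have hSm : ∀ j ≤ k, Measurable[mΩ] (S j) := fun j hj => ((hFS j hj).1).mono hF le_rfl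
  have hCm : ∀ j ≤ k, Measurable[mΩ] (C j) := fun j hj => ((hFS j hj).2).mono hF le_rfl
  have hQm : Measurable[mΩ] (Qr (k - d)) := (hFQ (k - d) le_rfl).mono hF le_rfl
  have hXm : Measurable[mΩ] (X (k - d)) := hXmeas
  -- integrability helper
  have hInt : ∀ (f : Ω → ℝ), Measurable[mΩ] f → ∀ B : ℝ, (∀ ω, |f ω| ≤ B) → Integrable f μ := by
    intro f hf B hb
    exact (integrable_const B).mono' hf.aestronglyMeasurable
      (ae_of_all _ fun ω => by simpa [Real.norm_eq_abs] using hb ω)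
  -- the three key functions
  set A : Ω → ℝ := fun ω => Qhat k ω + (S k ω * p - C k ω * (1 - p)) with hA_def
  set W : Ω → ℝ := fun ω => S (k - d) ω + C (k - d) ω with hW_def
  set Z : Ω → ℝ := fun ω => X (k - d) ω - p with hZ_def
  have hW01 : ∀ ω, 0 ≤ W ω ∧ W ω ≤ 1 := fun ω =>
    ⟨add_nonneg (hS01 _ ω).1 (hC01 _ ω).1, hSC _ ω⟩
  have hZb : ∀ ω, |Z ω| ≤ 1 := fun ω => by
    have := hX01 (k - d) ω
    simp only [hZ_def]
    rw [abs_le]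
    constructor <;> linarith
  -- F-measurability of Qhat k and A, W
  have hQhatkF : Measurable[F] (Qhat k) := by
    have heq : Qhat k = fun ω => Qr (k - d) ω +
        ∑ i ∈ Finset.Ico (k - d) k, (S i ω * p - C i ω * (1 - p)) := funext fun ω => hQhat k hk ω
    rw [heq]
    refine (hFQ (k - d) le_rfl).add ?_
    refine Finset.measurable_sum _ fun i hi => ?_
    have hik : i ≤ k := le_of_lt (Finset.mem_Ico.mp hi).2
    exact ((hFS i hik).1.mul_const p).sub ((hFS i hik).2.mul_const (1 - p))
  have hAF : Measurable[F] A :=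
    hQhatkF.add (((hFS k le_rfl).1.mul_const p).sub ((hFS k le_rfl).2.mul_const (1 - p)))
  have hWF : Measurable[F] W := (hFS (k - d) (by omega)).1.add (hFS (k - d) (by omega)).2
  -- measurability of Qr (k - d + 1) and Qhat (k+1)
  have hQm1 : Measurable[mΩ] (Qr (k - d + 1)) := by
    rcases le_or_gt (k - d + 1) 1 with h | h
    · have heq : Qr (k - d + 1) = fun _ => (q0 : ℝ) := funext fun ω => hQinit _ h ω
      rw [heq]; exact measurable_const
    · have h1 : (1 : ℤ) ≤ k - d := by omega
      have heq : Qr (k - d + 1) = fun ω => max 0 (Qr (k - d) ω + S (k - d) ω * X (k - d) ω -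
          C (k - d) ω * (1 - X (k - d) ω)) := funext fun ω => hQrec (k - d) h1 ω
      rw [heq]
      exact measurable_const.max
        (((hQm.add ((hSm (k - d) (by omega)).mul hXm)).sub
          ((hCm (k - d) (by omega)).mul (measurable_const.sub hXm))))
  have hQhat1meas : Measurable[mΩ] (Qhat (k + 1)) := by
    have he : k + 1 - d = k - d + 1 := by omega
    have heq : Qhat (k + 1) = fun ω => Qr (k - d + 1) ω +
        ∑ i ∈ Finset.Ico (k - d + 1) (k + 1), (S i ω * p - C i ω * (1 - p)) :=
      funext fun ω => by rw [hQhat (k + 1) (by omega) ω, he]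
    rw [heq]
    refine hQm1.add ?_
    refine Finset.measurable_sum _ fun i hi => ?_
    have hik : i ≤ k := by have := (Finset.mem_Ico.mp hi).2; omega
    exact ((hSm i hik).mul_const p).sub ((hCm i hik).mul_const (1 - p))
  -- integrability facts
  have hQhatk_bd := hQhatBd k hk
  have hQhatk_int : Integrable (Qhat k) μ :=
    hInt _ (hQhatkF.mono hF le_rfl) _ hQhatk_bd
  have hA_int : Integrable A μ := by
    refine hInt _ (hAF.mono hF le_rfl)
      ((q0 : ℝ) + ((k - d - 1).toNat : ℝ) + ((Finset.Ico (k - d) k).card : ℝ) + 1) fun ω => ?_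
    rw [hA_def]
    calc |Qhat k ω + (S k ω * p - C k ω * (1 - p))|
        ≤ |Qhat k ω| + |S k ω * p - C k ω * (1 - p)| := abs_add_le _ _
      _ ≤ _ := add_le_add (hQhatk_bd ω) (hterm k ω)
  have hWZ_int : Integrable (W * Z) μ := by
    have hmeas : Measurable[mΩ] (W * Z) := (hWF.mono hF le_rfl).mul (hXm.sub measurable_const)
    refine hInt _ hmeas 1 fun ω => ?_
    have h1 : |W ω| ≤ 1 := by rw [abs_of_nonneg (hW01 ω).1]; exact (hW01 ω).2
    calc |(W * Z) ω| = |W ω| * |Z ω| := by simp [abs_mul]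
      _ ≤ 1 * 1 := mul_le_mul h1 (hZb ω) (abs_nonneg _) zero_le_one
      _ = 1 := one_mul 1
  have hZ_int : Integrable Z μ := hInt _ (hXm.sub measurable_const) 1 hZb
  have hQhat1_int : Integrable (Qhat (k + 1)) μ :=
    hInt _ hQhat1meas _ (hQhatBd (k + 1) (by omega))
  -- pointwise key inequality
  have hkey : ∀ ω, A ω + W ω * Z ω ≤ Qhat (k + 1) ω := by
    intro ω
    have hs := hQhat k hk ω
    have hs1 := hQhat (k + 1) (by omega) ω
    have he : k + 1 - d = k - d + 1 := by omega
    rw [he] at hs1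
    have hd1 : Finset.Ico (k - d) k = insert (k - d) (Finset.Ico (k - d + 1) k) := by
      ext i; simp only [Finset.mem_Ico, Finset.mem_insert]; omega
    have hd2 : Finset.Ico (k - d + 1) (k + 1) = insert k (Finset.Ico (k - d + 1) k) := by
      ext i; simp only [Finset.mem_Ico, Finset.mem_insert]; omega
    have hnot1 : (k - d) ∉ Finset.Ico (k - d + 1) k := by simp
    have hnot2 : k ∉ Finset.Ico (k - d + 1) k := by simp
    rw [hd1, Finset.sum_insert hnot1] at hs
    rw [hd2, Finset.sum_insert hnot2] at hs1
    have hQstep : Qr (k - d) ω + (S (k - d) ω * X (k - d) ω -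
        C (k - d) ω * (1 - X (k - d) ω)) ≤ Qr (k - d + 1) ω := by
      rcases le_or_gt (k - d) 0 with h0 | h0
      · rw [hS0 (k - d) h0 ω, hC0 (k - d) h0 ω, hQinit (k - d) (by omega) ω,
          hQinit (k - d + 1) (by omega) ω]
        have : (0 : ℝ) * X (k - d) ω - 0 * (1 - X (k - d) ω) = 0 := by ring
        linarith
      · rw [hQrec (k - d) h0 ω]
        have := le_max_right (0 : ℝ) (Qr (k - d) ω + S (k - d) ω * X (k - d) ω -
          C (k - d) ω * (1 - X (k - d) ω))
        linarith
    have hring : A ω + W ω * Z ω =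
        (Qr (k - d) ω + (S (k - d) ω * X (k - d) ω - C (k - d) ω * (1 - X (k - d) ω))) +
        ((S k ω * p - C k ω * (1 - p)) +
          ∑ i ∈ Finset.Ico (k - d + 1) k, (S i ω * p - C i ω * (1 - p))) := by
      simp only [hA_def, hW_def, hZ_def]; rw [hs]; ring
    rw [hring, hs1]
    linarith
  -- conditional expectation computations
  haveI : SigmaFinite (μ.trim hF) := inferInstance
  have hmono : μ[A + W * Z|F] ≤ᵐ[μ] μ[Qhat (k + 1)|F] :=
    condExp_mono (hA_int.add hWZ_int) hQhat1_int (ae_of_all _ fun ω => hkey ω)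
  have hsplit : μ[A + W * Z|F] =ᵐ[μ] μ[A|F] + μ[W * Z|F] := condExp_add hA_int hWZ_int F
  have hAeq : μ[A|F] = A :=
    condExp_of_stronglyMeasurable hF hAF.stronglyMeasurable hA_int
  have hpull : μ[W * Z|F] =ᵐ[μ] W * μ[Z|F] := by
    refine condExp_stronglyMeasurable_mul_of_bound hF hWF.stronglyMeasurable hZ_int 1
      (ae_of_all _ fun ω => ?_)
    rw [Real.norm_eq_abs, abs_of_nonneg (hW01 ω).1]; exact (hW01 ω).2
  have hZcond : μ[Z|F] =ᵐ[μ] fun _ => μ[Z] := by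
    refine condExp_indep_eq hXmeas.comap_le hF ?_ hXindep
    have hXc : Measurable[MeasurableSpace.comap (X (k - d)) inferInstance] (X (k - d)) :=
      Measurable.of_comap_le le_rfl
    exact (hXc.sub measurable_const).stronglyMeasurable
  have hX_int : Integrable (X (k - d)) μ :=
    hInt _ hXm 1 fun ω => by rcases hXv (k - d) ω with h | h <;> rw [h] <;> norm_num
  have hZmean : μ[Z] = 0 := by
    rw [hZ_def]
    have : ∫ ω, (X (k - d) ω - p) ∂μ = (∫ ω, X (k - d) ω ∂μ) - ∫ _ω, (p : ℝ) ∂μ :=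
      integral_sub hX_int (integrable_const p)
    rw [this, hXmean, integral_const]
    simp
  -- combine
  filter_upwards [hmono, hsplit, hpull, hZcond] with ω h1 h2 h4 h5
  have hAω : A ω ≤ (μ[Qhat (k + 1)|F]) ω := by
    have e1 : (μ[A + W * Z|F]) ω = (μ[A|F]) ω + (μ[W * Z|F]) ω := h2
    have e2 : (μ[W * Z|F]) ω = W ω * (μ[Z|F]) ω := h4
    have e3 : (μ[Z|F]) ω = μ[Z] := h5
    have e4 : (μ[A|F]) ω = A ω := by rw [hAeq]
    have := h1
    rw [e1, e2, e3, hZmean, e4, mul_zero, add_zero] at this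
    exact this
  have hCk := hpolC k hk ω
  have hSk := hpolS k hk ω
  constructor
  · intro hle
    rw [if_neg (not_lt.mpr hle)] at hCk
    have hAval : A ω = Qhat k ω + p := by
      simp only [hA_def]; rw [hSk, hCk]; ring
    rw [hAval] at hAω
    exact hAω
  · intro hlt
    rw [if_pos hlt] at hCk
    have hAval : A ω = Qhat k ω - (1 - p) := by
      simp only [hA_def]; rw [hSk, hCk]; ring
    rw [hAval] at hAω
    exact hAω
end

section
/- Let γ > 0, δ ≥ 0, p ∈ [0,1] and q0 ≥ 0. On a probability space let (Q^r_k)_{k≥1}, (Q̂^r_k)_{k≥1}, (Ŝ_k)_{k≥1}, (X_k)_{k≥1} be stochastic processes with Q^r_k ≥ 0, Ŝ_k ∈ {0,1} and X_k ∈ {0,1}, such that almost surely for every k ≥ 1: Q^r_1 = q0, Q^r_{k+1} ≤ max(0, Q^r_k + Ŝ_k − (1 − X_k)), |Q̂^r_k − Q^r_k| ≤ δ, and (Q̂^r_k − γ)·Ŝ_k ≤ 0. Suppose moreover that for every k, X_k has mean p and is independent of Q^r_k, and that E[Q^r_k] ≥ γ − 1 − δ. Then liminf_{k→∞} E[(1/k)·∑_{i=1}^k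 Ŝ_i] ≥ (1 − p) − (1/2 + δ + (1 + δ)·(1 − p))/γ. -/
/-!
Quadratic Lyapunov drift. In a slot with `Ŝ_k = 1` the threshold rule gives
`Q^r_k ≤ Q̂^r_k + δ ≤ γ + δ`, so pointwise
`(Q^r_{k+1})² + 2 Q^r_k (1 - X_k) ≤ (Q^r_k)² + 2γ Ŝ_k + 2δ + 1`.
Taking expectations, independence turns `E[Q^r_k (1 - X_k)]` into `(1 - p) E[Q^r_k]`, which is at
least `(1 - p)(γ - 1 - δ)`. Telescoping and `E[(Q^r_{n+1})²] ≥ 0` give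
`2γ ∑_{i ≤ n} E[Ŝ_i] ≥ -q0² - n (2δ + 1 - 2(1 - p)(γ - 1 - δ))`; divide by `2γn` and let `n → ∞`.
-/

open MeasureTheory ProbabilityTheory Filter Finset

lemma le_one_of_eq_zero_or_eq_one {a : ℝ} (h : a = 0 ∨ a = 1) : a ≤ 1 := by
  rcases h with rfl | rfl <;> norm_num

lemma sq_le_sq_of_le_max_zero {a z : ℝ} (ha : 0 ≤ a) (h : a ≤ max 0 z) : a ^ 2 ≤ z ^ 2 := by
  have habs : a ≤ |z| := h.trans (max_le (abs_nonneg z) (le_abs_self z))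
  nlinarith [abs_nonneg z, sq_abs z]

lemma le_add_one_of_le_max_zero {q q' s x : ℝ} (hq : 0 ≤ q) (hs : s ≤ 1) (hx : x ≤ 1)
    (hstep : q' ≤ max 0 (q + s - (1 - x))) : q' ≤ q + 1 :=
  hstep.trans (max_le (by linarith) (by linarith))

lemma sq_add_two_mul_le_of_threshold {q q' qhat s x γ δ : ℝ} (hq' : 0 ≤ q')
    (hs : s = 0 ∨ s = 1) (hx : x = 0 ∨ x = 1) (hstep : q' ≤ max 0 (q + s - (1 - x)))
    (hpred : |qhat - q| ≤ δ) (hthr : (qhat - γ) * s ≤ 0) :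
    q' ^ 2 + 2 * (q * (1 - x)) ≤ q ^ 2 + 2 * γ * s + (2 * δ + 1) := by
  have hsq := sq_le_sq_of_le_max_zero hq' hstep
  have hδ : 0 ≤ δ := (abs_nonneg _).trans hpred
  have hq : q ≤ qhat + δ := by linarith [(abs_le.mp hpred).1]
  rcases hs with rfl | rfl <;> rcases hx with rfl | rfl <;> nlinarith

lemma le_add_nat_of_succ_le_add_one {u : ℕ → ℝ} (h : ∀ k ≥ 1, u (k + 1) ≤ u k + 1) (n : ℕ) :
    u (n + 1) ≤ u 1 + n := by
  induction n with
  | zero => simp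
  | succ n ih => push_cast; linarith [h (n + 1) (by omega)]

lemma le_add_nat_of_le_max_zero {q s x : ℕ → ℝ} (hq : ∀ k, 0 ≤ q k) (hs : ∀ k, s k ≤ 1)
    (hx : ∀ k, x k ≤ 1) (hstep : ∀ k ≥ 1, q (k + 1) ≤ max 0 (q k + s k - (1 - x k))) (n : ℕ) :
    q (n + 1) ≤ q 1 + n :=
  le_add_nat_of_succ_le_add_one
    (fun k hk => le_add_one_of_le_max_zero (hq k) (hs k) (hx k) (hstep k hk)) n

lemma neg_sub_mul_le_sum_Icc_of_drift {V a : ℕ → ℝ} {C : ℝ} (hV : ∀ n, 0 ≤ V n)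
    (h : ∀ k ≥ 1, V (k + 1) ≤ V k + a k + C) (n : ℕ) :
    -V 1 - n * C ≤ ∑ i ∈ Icc 1 n, a i := by
  have htel : V (n + 1) ≤ V 1 + ∑ i ∈ Icc 1 n, a i + n * C := by
    induction n with
    | zero => simp
    | succ n ih =>
      rw [sum_Icc_succ_top (by omega)]
      push_cast
      linarith [h (n + 1) (by omega)]
  linarith [hV (n + 1)]

lemma one_div_mul_sum_Icc_le_one {s : ℕ → ℝ} (hs : ∀ i, s i ≤ 1) (n : ℕ) :
    1 / (n : ℝ) * ∑ i ∈ Icc 1 n, s i ≤ 1 := by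
  rcases Nat.eq_zero_or_pos n with rfl | hn
  · simp
  have hsum : ∑ i ∈ Icc 1 n, s i ≤ n := by
    simpa using sum_le_sum fun i (_ : i ∈ Icc 1 n) => hs i
  rw [one_div_mul_eq_div, div_le_one (by exact_mod_cast hn)]
  exact hsum

lemma le_liminf_of_sub_div_le {u : ℕ → ℝ} {c b : ℝ} (hu : IsBoundedUnder (· ≤ ·) atTop u)
    (h : ∀ n ≥ 1, c - b / n ≤ u n) : c ≤ liminf u atTop := by
  have hlim : Tendsto (fun n : ℕ => c - b / n) atTop (nhds c) := by
    simpa using tendsto_const_nhds.sub (tendsto_const_div_atTop_nhds_zero_nat b)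
  rw [← hlim.liminf_eq]
  exact liminf_le_liminf (eventually_atTop.mpr ⟨1, h⟩) hlim.isBoundedUnder_ge
    hu.isCoboundedUnder_ge

lemma neg_div_le_liminf_average {a : ℕ → ℝ} {b c v : ℝ} (hb : 0 < b) (ha : ∀ i, a i ≤ 1)
    (h : ∀ n : ℕ, -v - n * c ≤ b * ∑ i ∈ Icc 1 n, a i) :
    -c / b ≤ liminf (fun n : ℕ => 1 / (n : ℝ) * ∑ i ∈ Icc 1 n, a i) atTop := by
  refine le_liminf_of_sub_div_le (b := v / b)
    (isBoundedUnder_of ⟨1, one_div_mul_sum_Icc_le_one ha⟩) fun n hn => ?_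
  have hn' : (0 : ℝ) < n := by exact_mod_cast hn
  rw [show -c / b - v / b / n = 1 / (n : ℝ) * ((-v - n * c) / b) by field_simp; ring]
  gcongr
  rw [div_le_iff₀ hb]
  linarith [h n]

section Expectation

variable {Ω : Type*} [MeasurableSpace Ω] {μ : Measure Ω}

lemma integrable_pow_of_ae_abs_le [IsFiniteMeasure μ] {f : Ω → ℝ} (hf : Measurable f) {C : ℝ}
    (hC : ∀ᵐ ω ∂μ, |f ω| ≤ C) (m : ℕ) : Integrable (fun ω => f ω ^ m) μ :=
  .of_bound (hf.pow_const m).aestronglyMeasurable (C ^ m) <| hC.mono fun ω h => by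
    simpa [abs_pow] using pow_le_pow_left₀ (abs_nonneg _) h m

lemma integrable_of_zero_or_one [IsFiniteMeasure μ] {f : Ω → ℝ} (hf : Measurable f)
    (h01 : ∀ ω, f ω = 0 ∨ f ω = 1) : Integrable f μ := by
  simpa using integrable_pow_of_ae_abs_le (μ := μ) hf (C := 1)
    (ae_of_all _ fun ω => by rcases h01 ω with h | h <;> simp [h]) 1

lemma integral_le_one_of_zero_or_one [IsProbabilityMeasure μ] {f : Ω → ℝ} (hf : Measurable f)
    (h01 : ∀ ω, f ω = 0 ∨ f ω = 1) : ∫ ω, f ω ∂μ ≤ 1 := by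
  simpa using integral_mono (integrable_of_zero_or_one (μ := μ) hf h01)
    (integrable_const (1 : ℝ))
    fun ω => le_one_of_eq_zero_or_eq_one (h01 ω)

lemma indepFun_one_sub_left {Q X : Ω → ℝ} (hXQ : IndepFun X Q μ) :
    IndepFun (fun ω => 1 - X ω) Q μ :=
  hXQ.comp (φ := fun x => 1 - x) (ψ := id) (by fun_prop) measurable_id

lemma integral_mul_one_sub_eq_of_indepFun [IsProbabilityMeasure μ] {Q X : Ω → ℝ}
    (hQ : Integrable Q μ) (hX : Integrable X μ) (hXQ : IndepFun X Q μ) :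
    ∫ ω, Q ω * (1 - X ω) ∂μ = (1 - ∫ ω, X ω ∂μ) * ∫ ω, Q ω ∂μ := by
  simp_rw [mul_comm (Q _)]
  rw [(indepFun_one_sub_left hXQ).integral_fun_mul_eq_mul_integral
    ((integrable_const 1).sub hX).aestronglyMeasurable hQ.aestronglyMeasurable,
    integral_sub (integrable_const 1) hX]
  simp

lemma integral_sq_le_of_ae_drift [IsProbabilityMeasure μ] {Q Q' S X : Ω → ℝ} {γ c m : ℝ}
    (hQ : Integrable Q μ) (hQ2 : Integrable (fun ω => Q ω ^ 2) μ)
    (hQ'2 : Integrable (fun ω => Q' ω ^ 2) μ) (hS : Integrable S μ) (hX : Integrable X μ)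
    (hXQ : IndepFun X Q μ) (hXle : ∫ ω, X ω ∂μ ≤ 1) (hm : m ≤ ∫ ω, Q ω ∂μ)
    (h : ∀ᵐ ω ∂μ, Q' ω ^ 2 + 2 * (Q ω * (1 - X ω)) ≤ Q ω ^ 2 + 2 * γ * S ω + c) :
    ∫ ω, Q' ω ^ 2 ∂μ ≤
      ∫ ω, Q ω ^ 2 ∂μ + 2 * γ * ∫ ω, S ω ∂μ + (c - 2 * (1 - ∫ ω, X ω ∂μ) * m) := by
  have hQX : Integrable (fun ω => 2 * (Q ω * (1 - X ω))) μ :=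
    (((indepFun_one_sub_left hXQ).integrable_mul ((integrable_const 1).sub hX) hQ).congr
      (ae_of_all _ fun ω => mul_comm _ _)).const_mul 2
  have hQS : Integrable (fun ω => Q ω ^ 2 + 2 * γ * S ω) μ := hQ2.add (hS.const_mul _)
  have hmono := integral_mono_ae (hQ'2.add hQX) (hQS.add (integrable_const c)) h
  simp only [Pi.add_apply] at hmono
  rw [integral_add hQ'2 hQX, integral_add hQS (integrable_const c), integral_add hQ2
    (hS.const_mul _), integral_const_mul, integral_const_mul,
    integral_mul_one_sub_eq_of_indepFun hQ hX hXQ] at hmono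
  have hcross : (1 - ∫ ω, X ω ∂μ) * m ≤ (1 - ∫ ω, X ω ∂μ) * ∫ ω, Q ω ∂μ :=
    mul_le_mul_of_nonneg_left hm (by linarith)
  simp only [integral_const, probReal_univ, one_smul] at hmono
  linarith

end Expectation

theorem stmt_13_general {Ω : Type*} [MeasurableSpace Ω] (μ : Measure Ω) [IsProbabilityMeasure μ]
    (γ δ p q0 : ℝ) (hγ : 0 < γ) (hp1 : p ≤ 1)
    (Qr Qhat Shat X : ℕ → Ω → ℝ)
    (hQnn : ∀ k ω, 0 ≤ Qr k ω)
    (hShat : ∀ k ω, Shat k ω = 0 ∨ Shat k ω = 1)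
    (hXv : ∀ k ω, X k ω = 0 ∨ X k ω = 1)
    (hmeasS : ∀ k, Measurable (Shat k))
    (hmeasX : ∀ k, Measurable (X k))
    (hmeasQ : ∀ k, Measurable (Qr k))
    (has : ∀ᵐ ω ∂μ, Qr 1 ω = q0 ∧ ∀ k ≥ 1,
      Qr (k + 1) ω ≤ max 0 (Qr k ω + Shat k ω - (1 - X k ω)) ∧
      |Qhat k ω - Qr k ω| ≤ δ ∧ (Qhat k ω - γ) * Shat k ω ≤ 0)
    (hXmean : ∀ k, ∫ ω, X k ω ∂μ = p)
    (hXindep : ∀ k, IndepFun (X k) (Qr k) μ)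
    (hEQ : ∀ k, γ - 1 - δ ≤ ∫ ω, Qr k ω ∂μ) :
    (1 - p) - (1 / 2 + δ + (1 + δ) * (1 - p)) / γ ≤
      Filter.liminf
        (fun k : ℕ => ∫ ω, (1 / (k : ℝ)) * ∑ i ∈ Finset.Icc 1 k, Shat i ω ∂μ)
        Filter.atTop := by
  have hSint k : Integrable (Shat k) μ := integrable_of_zero_or_one (hmeasS k) (hShat k)
  have hQint n m : Integrable (fun ω => Qr (n + 1) ω ^ m) μ := by
    refine integrable_pow_of_ae_abs_le (C := q0 + n) (hmeasQ _) ?_ m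
    filter_upwards [has] with ω ⟨h1, hstep⟩
    rw [abs_of_nonneg (hQnn _ _), ← h1]
    exact le_add_nat_of_le_max_zero (q := fun k => Qr k ω) (fun k => hQnn k ω)
      (fun k => le_one_of_eq_zero_or_eq_one (hShat k ω))
      (fun k => le_one_of_eq_zero_or_eq_one (hXv k ω)) (fun k hk => (hstep k hk).1) n
  have hdrift : ∀ k ≥ 1, ∫ ω, Qr (k + 1) ω ^ 2 ∂μ ≤ ∫ ω, Qr k ω ^ 2 ∂μ +
      2 * γ * ∫ ω, Shat k ω ∂μ + (2 * δ + 1 - 2 * (1 - p) * (γ - 1 - δ)) := by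
    intro k hk
    obtain ⟨n, rfl⟩ := Nat.exists_eq_add_of_le' hk
    rw [← hXmean (n + 1)]
    refine integral_sq_le_of_ae_drift (by simpa using hQint n 1) (hQint n 2) (hQint (n + 1) 2)
      (hSint _) (integrable_of_zero_or_one (hmeasX _) (hXv _)) (hXindep _)
      ((hXmean _).trans_le hp1) (hEQ _) ?_
    filter_upwards [has] with ω hω
    obtain ⟨hQ', hpred, hthr⟩ := hω.2 (n + 1) hk
    exact sq_add_two_mul_le_of_threshold (hQnn _ _) (hShat _ _) (hXv _ _) hQ' hpred hthr
  have hQ1 : ∫ ω, Qr 1 ω ^ 2 ∂μ = q0 ^ 2 := by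
    rw [integral_congr_ae (g := fun _ => q0 ^ 2) (has.mono fun ω h => by simp only [h.1])]
    simp
  have hmean : (fun n : ℕ => ∫ ω, (1 / (n : ℝ)) * ∑ i ∈ Icc 1 n, Shat i ω ∂μ) =
      fun n : ℕ => 1 / (n : ℝ) * ∑ i ∈ Icc 1 n, ∫ ω, Shat i ω ∂μ := by
    ext n
    rw [integral_const_mul, integral_finsetSum _ fun i _ => hSint i]
  rw [hmean, show (1 - p) - (1 / 2 + δ + (1 + δ) * (1 - p)) / γ =
    -(2 * δ + 1 - 2 * (1 - p) * (γ - 1 - δ)) / (2 * γ) by field_simp; ring]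
  refine neg_div_le_liminf_average (v := q0 ^ 2) (by positivity)
    (fun i => integral_le_one_of_zero_or_one (hmeasS i) (hShat i)) fun n => ?_
  simpa [hQ1, mul_sum] using neg_sub_mul_le_sum_Icc_of_drift
    (fun k => integral_nonneg fun ω => sq_nonneg (Qr k ω)) hdrift n

/-- Capacity loss bound for the threshold-`γ` policy with prediction errors of
size at most `δ`: the expected long-run fraction of slots available for
information packets satisfies
`liminf_k E[(1/k)·∑_{i=1}^k Ŝ_i] ≥ (1 − p) − (1/2 + δ + (1 + δ)(1 − p))/γ`. -/
theorem stmt_13 {Ω : Type*} [MeasurableSpace Ω] (μ : Measure Ω) [IsProbabilityMeasure μ]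
    (γ δ p q0 : ℝ) (hγ : 0 < γ) (hδ : 0 ≤ δ) (hp0 : 0 ≤ p) (hp1 : p ≤ 1) (hq0 : 0 ≤ q0)
    (Qr Qhat Shat X : ℕ → Ω → ℝ)
    (hQnn : ∀ k ω, 0 ≤ Qr k ω)
    (hShat : ∀ k ω, Shat k ω = 0 ∨ Shat k ω = 1)
    (hXv : ∀ k ω, X k ω = 0 ∨ X k ω = 1)
    (hmeasS : ∀ k, Measurable (Shat k))
    (hmeasX : ∀ k, Measurable (X k))
    (hmeasQ : ∀ k, Measurable (Qr k))
    (has : ∀ᵐ ω ∂μ, Qr 1 ω = q0 ∧ ∀ k ≥ 1,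
      Qr (k + 1) ω ≤ max 0 (Qr k ω + Shat k ω - (1 - X k ω)) ∧
      |Qhat k ω - Qr k ω| ≤ δ ∧ (Qhat k ω - γ) * Shat k ω ≤ 0)
    (hXmean : ∀ k, ∫ ω, X k ω ∂μ = p)
    (hXindep : ∀ k, IndepFun (X k) (Qr k) μ)
    (hEQ : ∀ k, γ - 1 - δ ≤ ∫ ω, Qr k ω ∂μ) :
    (1 - p) - (1 / 2 + δ + (1 + δ) * (1 - p)) / γ ≤
      Filter.liminf
        (fun k : ℕ => ∫ ω, (1 / (k : ℝ)) * ∑ i ∈ Finset.Icc 1 k, Shat i ω ∂μ)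
        Filter.atTop :=
  stmt_13_general μ γ δ p q0 hγ hp1 Qr Qhat Shat X hQnn hShat hXv hmeasS hmeasX hmeasQ has hXmean
    hXindep hEQ
end
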